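/- arXiv:2411.17322 — 5 statements merged into one kernel-verified Lean document; each statement's English description precedes it below -/
import Mathlib

section
/- Let G be a 2-connected graph on n vertices and let C be a longest cycle of G of length c with 4 ≤ c ≤ n−1. If u ∈ V(G)∖V(C) has exactly ⌊c/2⌋ neighbors on C, then u has no neighbor in V(G)∖V(C); that is, every neighbor of u lies on C. -/
open SimpleGraph

section Defs

variable {V α β : Type*}

/-- `G` contains a copy of `F` as a (not necessarily induced) subgraph. -/
def ContainsCopy (F : SimpleGraph α) (G : SimpleGraph β) : Prop :=
  ∃ f : α → β, Function.Injective f ∧ ∀ ⦃a b⦄, F.Adj a b → G.Adj (f a) (f b)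

/-- The number of edges of `G`. -/
noncomputable def edgeCount (G : SimpleGraph V) : ℕ := G.edgeSet.ncard

/-- `G` has a cycle of length at least `k`, i.e. `G` is not `𝓒_{≥k}`-free. -/
def HasCycleGE (G : SimpleGraph V) (k : ℕ) : Prop :=
  ∃ (v : V) (w : G.Walk v v), w.IsCycle ∧ k ≤ w.length

/-- `G` is 2-connected: it has at least 3 vertices, is connected, and stays
connected after deleting any single vertex. -/
def TwoConnected [Fintype V] (G : SimpleGraph V) : Prop :=
  3 ≤ Fintype.card V ∧ G.Connected ∧ ∀ v : V, (G.induce ({v}ᶜ : Set V)).Connected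

/-- `p(F) ≥ s`: for every proper 2-coloring of `F` both color classes have size
at least `s` (vacuously true for nonbipartite `F`, where `p(F) = ∞`). -/
def PGE [Fintype α] (F : SimpleGraph α) (s : ℕ) : Prop :=
  ∀ c : α → Bool, (∀ a b, F.Adj a b → c a ≠ c b) →
    s ≤ {a | c a = true}.ncard ∧ s ≤ {a | c a = false}.ncard

/-- `S` is a vertex covering of `F`: the complement of `S` is independent. -/
def IsVertexCovering (F : SimpleGraph α) (S : Set α) : Prop :=
  ∀ a b, a ∉ S → b ∉ S → ¬ F.Adj a b

/-- `G` is `𝓗`-free, where `𝓗 = {F[S] : S is a vertex covering of F}`. -/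
def CoverFree (F : SimpleGraph α) (G : SimpleGraph β) : Prop :=
  ∀ S : Set α, IsVertexCovering F S → ¬ ContainsCopy (F.induce S) G

/-- The maximum number of edges of an `n`-vertex graph satisfying `P`
(a generic Turán-type extremal number). -/
noncomputable def exMax (n : ℕ) (P : SimpleGraph (Fin n) → Prop) : ℕ :=
  sSup {m | ∃ G : SimpleGraph (Fin n), P G ∧ edgeCount G = m}

/-- The number of edges of `G` with both endpoints in `T`, i.e. `e(G[T])`. -/
noncomputable def edgesWithin (G : SimpleGraph V) (T : Set V) : ℕ :=
  {e ∈ G.edgeSet | ∀ x ∈ e, x ∈ T}.ncard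

/-- The number of edges of `G` with both endpoints outside `T`, i.e. `e(G−T)`. -/
noncomputable def edgesOutside (G : SimpleGraph V) (T : Set V) : ℕ :=
  {e ∈ G.edgeSet | ∀ x ∈ e, x ∉ T}.ncard

/-- The number of edges of `G` with exactly one endpoint in `T`, i.e. `e(G−T, T)`. -/
noncomputable def edgesCross (G : SimpleGraph V) (T : Set V) : ℕ :=
  {e ∈ G.edgeSet | ∃ a b, e = s(a, b) ∧ a ∈ T ∧ b ∉ T}.ncard

/-- The number of neighbors of `u` lying in `T` (e.g. `d_C(u)` for `T = V(C)`). -/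
noncomputable def degOn (G : SimpleGraph V) (T : Set V) (u : V) : ℕ :=
  {x ∈ T | G.Adj u x}.ncard

/-- The join `T ∨ I_b` of a graph `T` on `Fin a` with an independent set of
`b` vertices. -/
def joinIndep (a b : ℕ) (T : SimpleGraph (Fin a)) : SimpleGraph (Fin a ⊕ Fin b) :=
  SimpleGraph.fromRel (fun x y =>
    x.isLeft ≠ y.isLeft ∨ ∃ u v, x = Sum.inl u ∧ y = Sum.inl v ∧ T.Adj u v)

end Defs

section Aux
open SimpleGraph Walk

variable {V : Type*} {G : SimpleGraph V}

private lemma end_mem_support_tail {a b : V} (p : G.Walk a b) (h : ¬ p.Nil) :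
    b ∈ p.support.tail := by
  rw [← p.support_tail_of_not_nil h]; exact p.tail.end_mem_support

private lemma first_hit (Cs : Set V) {a b : V} (W : G.Walk a b) (ha : a ∉ Cs) (hb : b ∈ Cs) :
    ∃ z ∈ Cs, ∃ P : G.Walk a z,
      (∀ x ∈ P.support, x ∈ W.support) ∧ (∀ x ∈ P.support, x ∈ Cs → x = z) := by
  induction W with
  | nil => exact absurd hb ha
  | @cons a' m b' hadj W ih =>
    by_cases hm : m ∈ Cs
    · refine ⟨m, hm, Walk.cons hadj Walk.nil, ?_, ?_⟩
      · intro x hx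
        simp only [support_cons, support_nil, List.mem_cons, List.not_mem_nil, or_false] at hx ⊢
        rcases hx with rfl | rfl
        · exact Or.inl rfl
        · exact Or.inr W.start_mem_support
      · intro x hx hxc
        simp only [support_cons, support_nil, List.mem_cons, List.not_mem_nil, or_false] at hx
        rcases hx with rfl | rfl
        · exact absurd hxc ha
        · rfl
    · obtain ⟨z, hz, P, hPW, hPC⟩ := ih hm hb
      refine ⟨z, hz, Walk.cons hadj P, ?_, ?_⟩
      · intro x hx
        simp only [support_cons, List.mem_cons] at hx ⊢
        rcases hx with rfl | hx
        · exact Or.inl rfl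
        · exact Or.inr (hPW x hx)
      · intro x hx hxc
        simp only [support_cons, List.mem_cons] at hx
        rcases hx with rfl | hx
        · exact absurd hxc ha
        · exact hPC x hx hxc

private lemma length_rotate' [DecidableEq V] {v z : V} (w : G.Walk v v) (hz : z ∈ w.support) :
    (w.rotate _ hz).length = w.length := by
  have h := congrArg Walk.length (w.take_spec hz)
  rw [length_append] at h
  show ((w.dropUntil z hz).append (w.takeUntil z hz)).length = w.length
  rw [length_append]
  omega

private lemma mem_rotate [DecidableEq V] {v z : V} {w : G.Walk v v} (hnil : ¬ w.Nil)
    (hz : z ∈ w.support) (x : V) : x ∈ (w.rotate _ hz).support ↔ x ∈ w.support := by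
  have hperm := w.support_rotate _ hz
  constructor <;> intro hx <;> rw [Walk.mem_support_iff] at hx ⊢
  · rcases hx with rfl | hx
    · rw [← Walk.mem_support_iff]; exact hz
    · exact Or.inr (hperm.mem_iff.mp hx)
  · rcases hx with rfl | hx
    · exact Or.inr (hperm.mem_iff.mpr (end_mem_support_tail w hnil))
    · exact Or.inr (hperm.mem_iff.mpr hx)

private lemma isPath_append' {a b d : V} {p : G.Walk a b} {q : G.Walk b d}
    (hp : p.IsPath) (hq : q.IsPath) (h : ∀ x ∈ p.support, x ∈ q.support → x = b) :
    (p.append q).IsPath := by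
  rw [Walk.isPath_def, Walk.support_append, List.nodup_append]
  refine ⟨hp.support_nodup, ?_, ?_⟩
  · have := hq.support_nodup
    rw [q.support_eq_cons, List.nodup_cons] at this
    exact this.2
  · intro x hxp y hxq hxy
    subst hxy
    have hxb : x = b := h x hxp (List.mem_of_mem_tail hxq)
    subst hxb
    have := hq.support_nodup
    rw [q.support_eq_cons, List.nodup_cons] at this
    exact this.1 hxq

private lemma getVert_takeUntil' [DecidableEq V] {a b x : V} (p : G.Walk a b)
    (h : x ∈ p.support) : p.getVert ((p.takeUntil x h).length) = x := by
  have h2 := getVert_append (p.takeUntil x h) (p.dropUntil x h) ((p.takeUntil x h).length)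
  rw [p.take_spec h] at h2
  rwa [if_neg (lt_irrefl _), Nat.sub_self, getVert_zero] at h2

private lemma cycle_arcs [DecidableEq V] {z x : V} {w : G.Walk z z} (hc : w.IsCycle)
    (hx : x ∈ w.support) (hxz : x ≠ z) :
    (w.takeUntil x hx).IsPath ∧ (w.dropUntil x hx).IsPath ∧
    (∀ a ∈ (w.dropUntil x hx).support.tail, a ∈ (w.takeUntil x hx).support → a = z) := by
  have hsup : (w.takeUntil x hx).support ++ (w.dropUntil x hx).support.tail = w.support := by
    rw [← support_append, w.take_spec hx]
  have hTcons := (w.takeUntil x hx).support_eq_cons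
  have htail : w.support.tail =
      (w.takeUntil x hx).support.tail ++ (w.dropUntil x hx).support.tail := by
    rw [← hsup, hTcons]
    rfl
  have hnd := hc.support_nodup
  rw [htail, List.nodup_append] at hnd
  obtain ⟨n1, n2, disj⟩ := hnd
  have hDnil : ¬ (w.dropUntil x hx).Nil := Walk.not_nil_of_ne hxz
  have hzD : z ∈ (w.dropUntil x hx).support.tail := end_mem_support_tail _ hDnil
  have hdisj : ∀ a ∈ (w.dropUntil x hx).support.tail,
      a ∈ (w.takeUntil x hx).support → a = z := by
    intro a haD haT
    rw [Walk.mem_support_iff] at haT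
    rcases haT with rfl | haT
    · rfl
    · exact absurd rfl (disj _ haT _ haD)
  refine ⟨?_, ?_, hdisj⟩
  · rw [Walk.isPath_def, hTcons, List.nodup_cons]
    exact ⟨fun hzT => disj _ hzT _ hzD rfl, n1⟩
  · rw [Walk.isPath_def, (w.dropUntil x hx).support_eq_cons, List.nodup_cons]
    refine ⟨fun hxD => ?_, n2⟩
    have hxT : x ∈ (w.takeUntil x hx).support := (w.takeUntil x hx).end_mem_support
    rw [Walk.mem_support_iff] at hxT
    rcases hxT with rfl | hxT
    · exact hxz rfl
    · exact disj _ hxT _ hxD rfl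

private lemma bounds [DecidableEq V] {u z : V} {wz : G.Walk z z} (hcyc : wz.IsCycle)
    (hlong : ∀ (x : V) (w' : G.Walk x x), w'.IsCycle → w'.length ≤ wz.length)
    (hu : u ∉ wz.support)
    {Q : G.Walk u z} (hQ : Q.IsPath)
    (hQC : ∀ a ∈ Q.support, a ∈ wz.support → a = z)
    (hQe : ∀ x ∈ wz.support, s(x, u) ∉ Q.edges)
    {x : V} (hx : x ∈ wz.support) (hxz : x ≠ z) (hadj : G.Adj u x) :
    Q.length + (wz.takeUntil x hx).length + 1 ≤ wz.length ∧
    Q.length + 1 ≤ (wz.takeUntil x hx).length := by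
  obtain ⟨hT, hD, _⟩ := cycle_arcs hcyc hx hxz
  have hlenTD : (wz.takeUntil x hx).length + (wz.dropUntil x hx).length = wz.length := by
    have h := congrArg Walk.length (wz.take_spec hx); rwa [length_append] at h
  have key : ∀ (S : G.Walk z x), S.IsPath → (∀ a ∈ S.support, a ∈ wz.support) →
      Q.length + S.length + 1 ≤ wz.length := by
    intro S hS hSsub
    have hRP : (Q.append S).IsPath :=
      isPath_append' hQ hS (fun a haQ haS => hQC a haQ (hSsub a haS))
    have hedge : s(x, u) ∉ (Q.append S).edges := by
      rw [edges_append, List.mem_append]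
      rintro (h | h)
      · exact hQe x hx h
      · exact hu (hSsub u (S.snd_mem_support_of_mem_edges h))
    have hcyc2 : (Walk.cons hadj.symm (Q.append S)).IsCycle :=
      (Walk.cons_isCycle_iff _ hadj.symm).mpr ⟨hRP, hedge⟩
    have hle := hlong x _ hcyc2
    rw [length_cons, length_append] at hle
    omega
  have h1 := key (wz.takeUntil x hx) hT (fun a ha => wz.support_takeUntil_subset hx ha)
  have h2 := key (wz.dropUntil x hx).reverse hD.reverse (fun a ha => by
    rw [support_reverse, List.mem_reverse] at ha
    exact wz.support_dropUntil_subset hx ha)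
  rw [length_reverse] at h2
  have h3 := wz.length_takeUntil_le hx
  omega

private lemma gap [DecidableEq V] {u z : V} {wz : G.Walk z z} (hcyc : wz.IsCycle)
    (hlong : ∀ (x : V) (w' : G.Walk x x), w'.IsCycle → w'.length ≤ wz.length)
    (hu : u ∉ wz.support)
    {x₁ x₂ : V} (hx₁ : x₁ ∈ wz.support) (hx₂ : x₂ ∈ wz.support)
    (h1z : x₁ ≠ z) (h2z : x₂ ≠ z) (ha₁ : G.Adj u x₁) (ha₂ : G.Adj u x₂)
    (hidx : (wz.takeUntil x₂ hx₂).length = (wz.takeUntil x₁ hx₁).length + 1) : False := by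
  obtain ⟨hT₁, hD₁, hdisj⟩ := cycle_arcs hcyc hx₁ h1z
  have hlenTD : (wz.takeUntil x₁ hx₁).length + (wz.dropUntil x₁ hx₁).length = wz.length := by
    have h := congrArg Walk.length (wz.take_spec hx₁); rwa [length_append] at h
  have hg₂ : wz.getVert ((wz.takeUntil x₁ hx₁).length + 1) = x₂ := by
    rw [← hidx]; exact getVert_takeUntil' wz hx₂
  have hg : wz.getVert ((wz.takeUntil x₁ hx₁).length + 1) =
      (wz.dropUntil x₁ hx₁).getVert 1 := by
    have h2 := getVert_append (wz.takeUntil x₁ hx₁) (wz.dropUntil x₁ hx₁)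
      ((wz.takeUntil x₁ hx₁).length + 1)
    rw [wz.take_spec hx₁] at h2
    rw [h2, if_neg (by omega), Nat.add_sub_cancel_left]
  obtain ⟨b, hadj', r, hD1eq⟩ := Walk.exists_eq_cons_of_ne h1z (wz.dropUntil x₁ hx₁)
  have hb : b = x₂ := by
    rw [hD1eq] at hg
    rw [getVert_cons_succ, getVert_zero] at hg
    rw [← hg, ← hg₂]
  subst hb
  have hr : r.IsPath := by rw [hD1eq] at hD₁; exact hD₁.of_cons
  have hrsup : r.support = (wz.dropUntil x₁ hx₁).support.tail := by
    rw [hD1eq, support_cons, List.tail_cons]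
  have hR₂ : (r.append (wz.takeUntil x₁ hx₁)).IsPath :=
    isPath_append' hr hT₁ (fun a har haT => hdisj a (hrsup ▸ har) haT)
  have hsub : ∀ a ∈ (r.append (wz.takeUntil x₁ hx₁)).support, a ∈ wz.support := by
    intro a ha
    rw [mem_support_append_iff] at ha
    rcases ha with ha | ha
    · exact wz.support_dropUntil_subset hx₁ (hD1eq ▸ (List.mem_cons_of_mem _ (hrsup ▸ ha)))
    · exact wz.support_takeUntil_subset hx₁ ha
  have hp₂ : (Walk.cons ha₂ (r.append (wz.takeUntil x₁ hx₁))).IsPath :=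
    hR₂.cons (fun h => hu (hsub u h))
  have hedge : s(x₁, u) ∉ (Walk.cons ha₂ (r.append (wz.takeUntil x₁ hx₁))).edges := by
    rw [edges_cons, List.mem_cons]
    rintro (h | h)
    · rw [Sym2.eq_iff] at h
      rcases h with ⟨rfl, rfl⟩ | ⟨h1, -⟩
      · exact hu hx₁
      · subst h1; omega
    · exact hu (hsub u (Walk.snd_mem_support_of_mem_edges _ h))
  have hcyc2 : (Walk.cons ha₁.symm (Walk.cons ha₂ (r.append (wz.takeUntil x₁ hx₁)))).IsCycle :=
    (Walk.cons_isCycle_iff _ ha₁.symm).mpr ⟨hp₂, hedge⟩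
  have hle := hlong x₁ _ hcyc2
  have hrlen : r.length + 1 = (wz.dropUntil x₁ hx₁).length := by
    rw [hD1eq, length_cons]
  rw [length_cons, length_cons, length_append] at hle
  omega

end Aux


/-- For a longest cycle `C` of length `c` (`4 ≤ c ≤ n−1`) in a 2-connected graph,
any vertex `u` outside `C` with exactly `⌊c/2⌋` neighbors on `C` has all of its
neighbors on `C`. -/
theorem stmt6 {V : Type*} [Fintype V] (G : SimpleGraph V) (hG2 : TwoConnected G)
    (v : V) (w : G.Walk v v) (hw : w.IsCycle) (c : ℕ) (hlen : w.length = c)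
    (hlongest : ∀ (x : V) (w' : G.Walk x x), w'.IsCycle → w'.length ≤ c)
    (hc4 : 4 ≤ c) (hcn : c + 1 ≤ Fintype.card V)
    (u : V) (hu : u ∉ w.support)
    (hdeg : degOn G {x | x ∈ w.support} u = c / 2) :
    ∀ x : V, G.Adj u x → x ∈ w.support := by
  classical
  by_contra hcon
  push_neg at hcon
  obtain ⟨y, hyadj, hyC⟩ := hcon
  have hne_yu : y ≠ u := fun h => G.irrefl (h ▸ hyadj)
  have hvC : v ∈ w.support := w.start_mem_support
  have hvu : v ≠ u := fun h => hu (h ▸ hvC)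
  -- a walk from y to v avoiding u
  obtain ⟨W₀⟩ := (hG2.2.2 u).preconnected ⟨y, hne_yu⟩ ⟨v, hvu⟩
  let hom : G.induce ({u}ᶜ : Set V) →g G := ⟨Subtype.val, fun h => h⟩
  let W : G.Walk y v := W₀.map hom
  have hWu : ∀ a ∈ W.support, a ≠ u := by
    intro a ha
    rw [Walk.support_map] at ha
    obtain ⟨s, _, rfl⟩ := List.mem_map.mp ha
    exact s.2
  -- first hit of the cycle
  obtain ⟨z, hzC, P₀, hPW, hPC⟩ := first_hit {x | x ∈ w.support} W hyC hvC
  have hzmem : z ∈ w.support := hzC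
  let P := P₀.bypass
  have hPpath : P.IsPath := P₀.bypass_isPath
  have hPsub : P.support ⊆ P₀.support := P₀.support_bypass_subset
  have hPu : u ∉ P.support := fun h => (hWu u (hPW u (hPsub h))) rfl
  have hPCs : ∀ x ∈ P.support, x ∈ w.support → x = z := fun x hx hxC => hPC x (hPsub hx) hxC
  have hyz : y ≠ z := fun h => hyC (h ▸ hzmem)
  -- the path Q from u to z
  let Q : G.Walk u z := Walk.cons hyadj P
  have hQpath : Q.IsPath := hPpath.cons hPu
  have hQlen : 2 ≤ Q.length := by
    have h0 : P.length ≠ 0 := fun h0 => hyz (Walk.eq_of_length_eq_zero h0)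
    have : Q.length = P.length + 1 := Walk.length_cons _ _
    omega
  -- rotated cycle at z
  have hwnil : ¬ w.Nil := by rw [Walk.nil_iff_length_eq, hlen]; omega
  let wz := w.rotate _ hzmem
  have hcycz : wz.IsCycle := hw.rotate hzmem
  have hlenz : wz.length = c := by rw [length_rotate' w hzmem, hlen]
  have hmem : ∀ x, x ∈ wz.support ↔ x ∈ w.support := mem_rotate hwnil hzmem
  have huz : u ∉ wz.support := fun h => hu ((hmem u).mp h)
  have hlongz : ∀ (x : V) (w' : G.Walk x x), w'.IsCycle → w'.length ≤ wz.length :=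
    fun x w' h => hlenz ▸ hlongest x w' h
  have hQC : ∀ a ∈ Q.support, a ∈ wz.support → a = z := by
    intro a ha hawz
    rw [Walk.support_cons, List.mem_cons] at ha
    rcases ha with rfl | ha
    · exact absurd hawz huz
    · exact hPCs a ha ((hmem a).mp hawz)
  have hQe : ∀ x ∈ wz.support, s(x, u) ∉ Q.edges := by
    intro x hxw he
    rw [Walk.edges_cons, List.mem_cons] at he
    rcases he with h | h
    · rw [Sym2.eq_iff] at h
      rcases h with ⟨rfl, rfl⟩ | ⟨h1, -⟩
      · exact huz hxw
      · subst h1; exact hyC ((hmem x).mp hxw)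
    · exact hPu (P.snd_mem_support_of_mem_edges h)
  -- the neighbor finset
  have hNfin : ({x | x ∈ w.support ∧ G.Adj u x} : Set V).Finite := Set.toFinite _
  have hNcard : hNfin.toFinset.card = c / 2 := by
    unfold degOn at hdeg
    have hdeg' : ({x | x ∈ w.support ∧ G.Adj u x} : Set V).ncard = c / 2 := hdeg
    rw [Set.ncard_eq_toFinset_card _ hNfin] at hdeg'
    exact hdeg'
  set Ne := hNfin.toFinset.erase z with hNe
  have hNecard : c / 2 - 1 ≤ Ne.card := by
    by_cases hzN : z ∈ hNfin.toFinset
    · rw [hNe, Finset.card_erase_of_mem hzN, hNcard]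
    · rw [hNe, Finset.erase_eq_of_notMem hzN, hNcard]; omega
  -- the index function
  let f : V → ℕ := fun x => if h : x ∈ wz.support then (wz.takeUntil x h).length else 0
  have hf : ∀ (x : V) (h : x ∈ wz.support), f x = (wz.takeUntil x h).length :=
    fun x h => dif_pos h
  have hmemNe : ∀ x ∈ Ne, x ∈ wz.support ∧ x ≠ z ∧ G.Adj u x := by
    intro x hx
    have hxz := Finset.ne_of_mem_erase hx
    have hxNf := Finset.mem_of_mem_erase hx
    rw [Set.Finite.mem_toFinset] at hxNf
    exact ⟨(hmem x).mpr hxNf.1, hxz, hxNf.2⟩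
  have hfbound : ∀ x ∈ Ne, 3 ≤ f x ∧ f x ≤ c - 3 := by
    intro x hx
    obtain ⟨hxm, hxz, hadjx⟩ := hmemNe x hx
    have hb := bounds hcycz hlongz huz hQpath hQC hQe hxm hxz hadjx
    rw [← hf x hxm] at hb
    omega
  have hinj : Set.InjOn f Ne := by
    intro x hx y hy hxy
    obtain ⟨hxm, -, -⟩ := hmemNe x hx
    obtain ⟨hym, -, -⟩ := hmemNe y hy
    rw [← getVert_takeUntil' wz hxm, ← getVert_takeUntil' wz hym, ← hf x hxm, ← hf y hym, hxy]
  have hgap : ∀ x ∈ Ne, ∀ y ∈ Ne, f y = f x + 1 → False := by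
    intro x hx y hy hxy
    obtain ⟨hxm, hxz, hax⟩ := hmemNe x hx
    obtain ⟨hym, hyz', hay⟩ := hmemNe y hy
    exact gap hcycz hlongz huz hxm hym hxz hyz' hax hay
      (by rw [← hf y hym, ← hf x hxm]; exact hxy)
  -- counting
  set S := Ne.image f with hS
  have hScard : S.card = Ne.card := Finset.card_image_of_injOn hinj
  have hSbound : ∀ n ∈ S, 3 ≤ n ∧ n ≤ c - 3 := by
    intro n hn
    obtain ⟨x, hx, rfl⟩ := Finset.mem_image.mp hn
    exact hfbound x hx
  have hSgap : ∀ m ∈ S, ∀ n ∈ S, n ≠ m + 1 := by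
    intro m hm n hn hmn
    obtain ⟨x, hx, rfl⟩ := Finset.mem_image.mp hm
    obtain ⟨x', hx', rfl⟩ := Finset.mem_image.mp hn
    exact hgap x hx x' hx' hmn
  have hc6 : 6 ≤ c := by
    have h1 : 1 ≤ S.card := by rw [hScard]; omega
    obtain ⟨n₀, hn₀⟩ := Finset.card_pos.mp h1
    have := hSbound n₀ hn₀
    omega
  have hinj2 : Set.InjOn (fun n => (n - 3) / 2) S := by
    intro m hm n hn hmn
    have h1 := hSbound m hm
    have h2 := hSbound n hn
    have h3 := hSgap m hm n hn
    have h4 := hSgap n hn m hm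
    simp only at hmn
    rcases lt_trichotomy m n with h | h | h
    · have : m + 2 ≤ n := by omega
      omega
    · exact h
    · have : n + 2 ≤ m := by omega
      omega
  have hsub2 : S.image (fun n => (n - 3) / 2) ⊆ Finset.range ((c - 6) / 2 + 1) := by
    intro k hk
    obtain ⟨n, hn, rfl⟩ := Finset.mem_image.mp hk
    have := hSbound n hn
    rw [Finset.mem_range]
    omega
  have hfinal : S.card ≤ (c - 6) / 2 + 1 := by
    rw [← Finset.card_image_of_injOn hinj2]
    calc (S.image (fun n => (n - 3) / 2)).card ≤ (Finset.range ((c - 6) / 2 + 1)).card :=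
          Finset.card_le_card hsub2
      _ = (c - 6) / 2 + 1 := Finset.card_range _
  omega
end

section
/- Let F be a graph and let G be an F-free graph on n vertices. Let C be a longest cycle of G of length c, where c is even, 4 ≤ c ≤ n−1, and p(F) ≥ c/2 + 1. If |A_{c/2}| ≥ |V(F)|, where A_{c/2} = {u ∈ V(G)∖V(C) : d_C(u) = c/2}, then the number of edges of G induced on V(C) satisfies e(G[C]) ≤ ex(c/2, 𝓗) + (c/2)², where 𝓗 = {F[S] : S is a vertex covering of F}. -/
open SimpleGraph

section CycleSeq
variable {V : Type*} {G : SimpleGraph V}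

lemma exists_walk_seq (g : ℕ → V) (m : ℕ) (hadj : ∀ k < m, G.Adj (g k) (g (k+1))) :
    ∀ n, n ≤ m → ∃ p : G.Walk (g 0) (g n), p.length = n ∧
      p.support = (List.range (n+1)).map g ∧
      p.edges = (List.range n).map (fun k => s(g k, g (k+1))) := by
  intro n
  induction n with
  | zero => exact fun _ => ⟨Walk.nil, rfl, by simp [List.range_succ], by simp⟩
  | succ n ih =>
    intro hn
    obtain ⟨p, hl, hs, he⟩ := ih (by omega)
    refine ⟨p.concat (hadj n (by omega)), ?_, ?_, ?_⟩
    · simp [Walk.length_concat, hl]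
    · rw [Walk.support_concat, hs, List.range_succ (n := n+1)]
      simp
    · rw [Walk.edges_concat, he, List.range_succ (n := n)]
      simp

lemma exists_cycle_of_seq (g : ℕ → V) (m : ℕ) (hm : 3 ≤ m)
    (hadj : ∀ k < m, G.Adj (g k) (g (k+1))) (hper : g m = g 0)
    (hinj : ∀ i < m, ∀ j < m, g i = g j → i = j) :
    ∃ (x : V) (p : G.Walk x x), p.IsCycle ∧ p.length = m := by
  obtain ⟨p, hl, hs, he⟩ := exists_walk_seq g m hadj m le_rfl
  have hinj' : ∀ i ≤ m, ∀ j ≤ m, g i = g j → i = j ∨ (i = 0 ∧ j = m) ∨ (i = m ∧ j = 0) := by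
    intro i hi j hj hij
    have h0 : ∀ k ≤ m, g k = g (k % m) := by
      intro k hk
      rcases eq_or_lt_of_le hk with h | h
      · subst h; simpa using hper
      · rw [Nat.mod_eq_of_lt h]
    rw [h0 i hi, h0 j hj] at hij
    have := hinj _ (Nat.mod_lt _ (by omega)) _ (Nat.mod_lt _ (by omega)) hij
    rcases eq_or_lt_of_le hi with h1 | h1 <;> rcases eq_or_lt_of_le hj with h2 | h2
    · omega
    · rw [h1, Nat.mod_self, Nat.mod_eq_of_lt h2] at this; omega
    · rw [h2, Nat.mod_self, Nat.mod_eq_of_lt h1] at this; omega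
    · rw [Nat.mod_eq_of_lt h1, Nat.mod_eq_of_lt h2] at this; omega
  refine ⟨g 0, p.copy rfl hper, ⟨⟨⟨?_⟩, ?_⟩, ?_⟩, by simp [hl]⟩
  · -- edges nodup
    rw [Walk.edges_copy, he]
    refine List.Nodup.map_on ?_ List.nodup_range
    intro i hi j hj hij
    simp only [List.mem_range] at hi hj
    rw [Sym2.eq_iff] at hij
    rcases hij with ⟨h1, _⟩ | ⟨h1, h2⟩
    · have := hinj' i (by omega) j (by omega) h1
      omega
    · have e1 := hinj' i (by omega) (j+1) (by omega) h1
      have e2 := hinj' (i+1) (by omega) j (by omega) h2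
      omega
  · -- ne nil
    intro h
    have : p.length = 0 := by
      have := congrArg Walk.length h
      simpa using this
    omega
  · -- support tail nodup
    rw [Walk.support_copy, hs, List.range_succ_eq_map]
    rw [List.map_cons, List.tail_cons]
    rw [List.map_map]
    refine List.Nodup.map_on ?_ List.nodup_range
    intro i hi j hj hij
    simp only [List.mem_range] at hi hj
    have := hinj' (i+1) (by omega) (j+1) (by omega) hij
    omega

lemma support_eq_map_getVert {u v : V} (w : G.Walk u v) :
    w.support = (List.range (w.length+1)).map w.getVert := by
  induction w with
  | nil => simp [Walk.getVert]
  | cons h p ih =>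
    rw [Walk.support_cons, ih, Walk.length_cons, List.range_succ_eq_map (n := p.length + 1)]
    simp only [List.map_cons, List.map_map]
    congr 1

end CycleSeq


section Alt
variable {c : ℕ}

lemma mod_small_cases {c i j : ℕ} (h : i % c = j % c) (hc : 0 < c)
    (hi : i < 2*c) (hj : j < 2*c) : i = j ∨ i + c = j ∨ j + c = i := by
  have e : ∀ k, k < 2*c → k % c = if k < c then k else k - c := by
    intro k hk
    split
    · exact Nat.mod_eq_of_lt ‹_›
    · rw [Nat.mod_eq_sub_mod (by omega), Nat.mod_eq_of_lt (by omega)]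
  rw [e i hi, e j hj] at h
  split_ifs at h <;> omega

lemma natcast_zmod_inj {i j : ℕ} (hc : 0 < c) (hi : i < c) (hj : j < c)
    (h : (i : ZMod c) = j) : i = j := by
  rw [ZMod.natCast_eq_natCast_iff'] at h
  rwa [Nat.mod_eq_of_lt hi, Nat.mod_eq_of_lt hj] at h

lemma even_val_natCast (hc2 : 2 ∣ c) (n : ℕ) : Even ((n : ZMod c)).val ↔ Even n := by
  rw [ZMod.val_natCast, Nat.even_iff, Nat.even_iff, Nat.mod_mod_of_dvd n hc2]

lemma even_val_add_one (hc2 : 2 ∣ c) [NeZero c] (z : ZMod c) :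
    Even ((z+1).val) ↔ ¬ Even z.val := by
  have h1 : z + 1 = ((z.val + 1 : ℕ) : ZMod c) := by
    push_cast [ZMod.natCast_zmod_val]; ring
  rw [h1, even_val_natCast hc2, Nat.even_add_one]

lemma alt_parity (hc4 : 4 ≤ c) (hc2 : 2 ∣ c) (S : Set (ZMod c))
    (hcard : S.ncard = c / 2) (hnc : ∀ z ∈ S, z + 1 ∉ S) :
    ∀ z : ZMod c, z ∈ S ↔ ((0 : ZMod c) ∈ S ↔ Even z.val) := by
  haveI : NeZero c := ⟨by omega⟩
  haveI : Fintype (ZMod c) := ZMod.fintype c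
  haveI : Finite (ZMod c) := Finite.of_fintype _
  set T := (fun z : ZMod c => z + 1) '' S with hT
  have hTcard : T.ncard = c / 2 := by
    rw [hT, Set.ncard_image_of_injective _ (add_left_injective 1)]; exact hcard
  have hdisj : Disjoint S T := by
    rw [Set.disjoint_right]
    rintro z ⟨s, hs, rfl⟩ hz
    exact hnc s hs hz
  have huniv : S ∪ T = Set.univ := by
    refine Set.eq_of_subset_of_ncard_le (Set.subset_univ _) ?_ (Set.toFinite _)
    rw [Set.ncard_union_eq hdisj (Set.toFinite _) (Set.toFinite _), hcard, hTcard,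
      Set.ncard_univ, Nat.card_zmod]
    omega
  have step : ∀ z : ZMod c, z + 1 ∈ S ↔ z ∉ S := by
    intro z
    constructor
    · intro h1 hz; exact hnc z hz h1
    · intro hz
      have : z + 1 ∈ S ∪ T := huniv ▸ Set.mem_univ _
      rcases this with h | ⟨s, hs, hsz⟩
      · exact h
      · exact absurd (add_left_injective 1 hsz ▸ hs) hz
  have natc : ∀ n : ℕ, ((n : ZMod c) ∈ S ↔ ((0 : ZMod c) ∈ S ↔ Even n)) := by
    intro n
    induction n with
    | zero => simp
    | succ n ih =>
      have hcast : ((n+1 : ℕ) : ZMod c) = (n : ZMod c) + 1 := by push_cast; ring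
      rw [hcast, step, ih, Nat.even_add_one]
      tauto
  intro z
  conv_lhs => rw [← ZMod.natCast_zmod_val z]
  rw [natc z.val]

end Alt

section ToSeq
variable {V : Type*} {G : SimpleGraph V}

lemma cycle_getVert_injOn {v : V} {w : G.Walk v v} (hw : w.IsCycle) :
    ∀ i < w.length, ∀ j < w.length, w.getVert i = w.getVert j → i = j := by
  have hnd := hw.support_nodup
  rw [support_eq_map_getVert, List.range_succ_eq_map, List.map_cons, List.tail_cons,
    List.map_map] at hnd
  have h1 : ∀ i < w.length, ∀ j < w.length,
      w.getVert (i+1) = w.getVert (j+1) → i = j := by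
    intro i hi j hj hij
    exact List.inj_on_of_nodup_map hnd (List.mem_range.mpr hi) (List.mem_range.mpr hj) hij
  intro i hi j hj hij
  have hlast : w.getVert w.length = v := w.getVert_length
  rcases Nat.eq_zero_or_pos i with h0 | h0 <;> rcases Nat.eq_zero_or_pos j with h0' | h0'
  · omega
  · subst h0
    have hij2 : w.getVert w.length = w.getVert j :=
      (hlast.trans (w.getVert_zero).symm).trans hij
    have hlen : 0 < w.length := by
      have := hw.three_le_length; omega
    have := h1 (w.length - 1) (by omega) (j-1) (by omega)
      (by rw [Nat.sub_add_cancel (by omega), Nat.sub_add_cancel (by omega)]; exact hij2)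
    omega
  · subst h0'
    have hij2 : w.getVert i = w.getVert w.length :=
      hij.trans ((w.getVert_zero).trans hlast.symm)
    have hlen : 0 < w.length := by
      have := hw.three_le_length; omega
    have := h1 (i - 1) (by omega) (w.length - 1) (by omega)
      (by rw [Nat.sub_add_cancel (by omega), Nat.sub_add_cancel (by omega)]; exact hij2)
    omega
  · have := h1 (i-1) (by omega) (j-1) (by omega)
      (by rw [Nat.sub_add_cancel (by omega), Nat.sub_add_cancel (by omega)]; exact hij)
    omega

lemma cycle_to_seq {v : V} {w : G.Walk v v} (hw : w.IsCycle) {c : ℕ}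
    (hlen : w.length = c) (hc4 : 4 ≤ c) :
    ∃ g : ZMod c → V, Function.Injective g ∧ (∀ z, G.Adj (g z) (g (z + 1))) ∧
      Set.range g = {x | x ∈ w.support} := by
  haveI : NeZero c := ⟨by omega⟩
  refine ⟨fun z => w.getVert z.val, ?_, ?_, ?_⟩
  · intro z₁ z₂ h
    have := cycle_getVert_injOn hw z₁.val (by rw [hlen]; exact z₁.val_lt) z₂.val
      (by rw [hlen]; exact z₂.val_lt) h
    exact ZMod.val_injective c this
  · intro z
    have hv := z.val_lt
    have hadj := w.adj_getVert_succ (i := z.val) (by omega)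
    have hval : (z+1).val = (z.val + 1) % c := by
      conv_lhs => rw [← ZMod.natCast_zmod_val z]
      rw [← Nat.cast_one, ← Nat.cast_add, ZMod.val_natCast]
    show G.Adj (w.getVert z.val) (w.getVert (z+1).val)
    rcases Nat.lt_or_ge (z.val + 1) c with h | h
    · rw [hval, Nat.mod_eq_of_lt h]; exact hadj
    · have hz : z.val + 1 = c := by omega
      have h2 : (z+1).val = 0 := by rw [hval, hz, Nat.mod_self]
      rw [h2, w.getVert_zero]
      have h3 : w.getVert (z.val + 1) = v := by rw [hz, ← hlen, w.getVert_length]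
      rwa [h3] at hadj
  · ext x
    simp only [Set.mem_range, Set.mem_setOf_eq, Walk.mem_support_iff_exists_getVert]
    constructor
    · rintro ⟨z, rfl⟩
      exact ⟨z.val, rfl, by rw [hlen]; exact z.val_lt.le⟩
    · rintro ⟨n, rfl, hn⟩
      refine ⟨(n : ZMod c), ?_⟩
      show w.getVert ((n : ZMod c)).val = w.getVert n
      rw [ZMod.val_natCast]
      rcases Nat.lt_or_ge n c with h | h
      · rw [Nat.mod_eq_of_lt h]
      · have : n = c := by omega
        subst this
        rw [Nat.mod_self, w.getVert_zero, ← hlen, w.getVert_length]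

end ToSeq

lemma val_sub_one {c : ℕ} [NeZero c] {x : ZMod c} (hx : x.val ≠ 0) :
    (x - 1).val = x.val - 1 := by
  have h1 : x - 1 = ((x.val - 1 : ℕ) : ZMod c) := by
    rw [Nat.cast_sub (by omega), ZMod.natCast_zmod_val, Nat.cast_one]
  rw [h1, ZMod.val_natCast, Nat.mod_eq_of_lt (by have := ZMod.val_lt x; omega)]

section Constr
variable {V : Type*} {G : SimpleGraph V} {c : ℕ}

lemma no_two_consecutive (hc4 : 4 ≤ c)
    (hlong : ∀ (x : V) (p : G.Walk x x), p.IsCycle → p.length ≤ c)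
    (g : ZMod c → V) (ginj : Function.Injective g)
    (gadj : ∀ z, G.Adj (g z) (g (z + 1)))
    {u : V} (hu : u ∉ Set.range g) {z : ZMod c}
    (h1 : G.Adj u (g z)) (h2 : G.Adj u (g (z+1))) : False := by
  haveI : NeZero c := ⟨by omega⟩
  set h : ℕ → V := fun k => if k % (c+1) = 0 then u
    else g (z + ((k % (c+1) : ℕ) : ZMod c)) with hh
  have Hu : ∀ k, k % (c+1) = 0 → h k = u := by
    intro k hk; simp only [hh]; rw [if_pos hk]
  have Hg' : ∀ k, 0 < k → k ≤ c → h k = g (z + (k : ZMod c)) := by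
    intro k hk0 hkc
    simp only [hh]
    rw [Nat.mod_eq_of_lt (by omega), if_neg (by omega)]
  have hadj : ∀ k < c+1, G.Adj (h k) (h (k+1)) := by
    intro k hk
    rcases Nat.eq_zero_or_pos k with rfl | hk0
    · rw [Hu 0 (by simp), Hg' 1 (by omega) (by omega)]
      rw [show ((1:ℕ) : ZMod c) = 1 from Nat.cast_one]
      exact h2
    rcases Nat.lt_or_ge (k+1) (c+1) with hk1 | hk1
    · rw [Hg' k (by omega) (by omega), Hg' (k+1) (by omega) (by omega)]
      have := gadj (z + (k : ZMod c))
      rw [show z + (k:ZMod c) + 1 = z + ((k+1 : ℕ) : ZMod c) from by push_cast; ring] at this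
      exact this
    · have hkc : k = c := by omega
      rw [hkc]
      rw [Hg' c (by omega) le_rfl, Hu (c+1) (by simp)]
      rw [show z + ((c:ℕ) : ZMod c) = z from by rw [ZMod.natCast_self]; ring]
      exact h1.symm
  have hper : h (c+1) = h 0 := by rw [Hu (c+1) (by simp), Hu 0 (by simp)]
  have hinj : ∀ i < c+1, ∀ j < c+1, h i = h j → i = j := by
    intro i hi j hj hij
    rcases Nat.eq_zero_or_pos i with rfl | hi0 <;> rcases Nat.eq_zero_or_pos j with rfl | hj0
    · rfl
    · rw [Hu 0 (by simp), Hg' j (by omega) (by omega)] at hij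
      exact absurd ⟨_, hij.symm⟩ hu
    · rw [Hg' i (by omega) (by omega), Hu 0 (by simp)] at hij
      exact absurd ⟨_, hij⟩ hu
    · rw [Hg' i (by omega) (by omega), Hg' j (by omega) (by omega)] at hij
      have h2 := add_right_injective z (ginj hij)
      rw [ZMod.natCast_eq_natCast_iff'] at h2
      have := mod_small_cases h2 (by omega) (by omega) (by omega)
      omega
  obtain ⟨x, p, hp, hpl⟩ := exists_cycle_of_seq h (c+1) (by omega) hadj hper hinj
  have := hlong x p hp
  omega

lemma no_odd_chord (hc4 : 4 ≤ c) (hc2 : 2 ∣ c)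
    (hlong : ∀ (x : V) (p : G.Walk x x), p.IsCycle → p.length ≤ c)
    (g : ZMod c → V) (ginj : Function.Injective g)
    (gadj : ∀ z, G.Adj (g z) (g (z + 1)))
    {u : V} (hu : u ∉ Set.range g)
    (hX : ∀ z : ZMod c, Even z.val → G.Adj u (g z))
    {a b : ZMod c} (ha : ¬ Even a.val) (hb : ¬ Even b.val) (hab : a ≠ b)
    (hch : G.Adj (g a) (g b)) : False := by
  haveI : NeZero c := ⟨by omega⟩
  have ha2 : a.val % 2 = 1 := by rwa [Nat.even_iff, ← Ne, Nat.mod_two_ne_zero] at ha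
  have hb2 : b.val % 2 = 1 := by rwa [Nat.even_iff, ← Ne, Nat.mod_two_ne_zero] at hb
  have hc2' : c % 2 = 0 := by omega
  set d := (b - a).val with hd
  have hd0 : d ≠ 0 := by
    intro h0
    have h1 := (ZMod.val_eq_zero (b-a)).mp h0
    rw [sub_eq_zero] at h1
    exact hab h1.symm
  have hdc : d < c := ZMod.val_lt _
  have havc : a.val < c := ZMod.val_lt _
  have hbvc : b.val < c := ZMod.val_lt _
  have hkey : b - a = ((b.val + c - a.val : ℕ) : ZMod c) := by
    rw [Nat.cast_sub (by omega), Nat.cast_add, ZMod.natCast_zmod_val, ZMod.natCast_self,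
      ZMod.natCast_zmod_val]
    ring
  have hde : d % 2 = 0 := by
    rw [hd, hkey, ZMod.val_natCast, Nat.mod_mod_of_dvd _ hc2]
    omega
  set B := c - d with hB
  have hB1 : 2 ≤ B := by omega
  have hB2 : B ≤ c - 2 := by omega
  have key2 : a - ((B:ℕ) : ZMod c) = b := by
    rw [hB, Nat.cast_sub (by omega), ZMod.natCast_self, hd, ZMod.natCast_zmod_val]
    ring
  have key3 : a + ((c - B - 1 : ℕ) : ZMod c) = b - 1 := by
    rw [show c - B - 1 = d - 1 from by omega, Nat.cast_sub (by omega), Nat.cast_one,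
      hd, ZMod.natCast_zmod_val]
    ring
  set h : ℕ → V := fun k => if k % (c+1) = 0 then u
    else if k % (c+1) ≤ B then g (a - ((k % (c+1) : ℕ) : ZMod c))
    else g (a + ((k % (c+1) - B - 1 : ℕ) : ZMod c)) with hh
  have Hu : ∀ k, k % (c+1) = 0 → h k = u := by
    intro k hk; simp only [hh]; rw [if_pos hk]
  have Hb : ∀ k, 1 ≤ k → k ≤ B → h k = g (a - (k : ZMod c)) := by
    intro k h1 h2; simp only [hh]
    rw [Nat.mod_eq_of_lt (by omega), if_neg (by omega), if_pos h2]
  have Hf : ∀ k, B + 1 ≤ k → k ≤ c → h k = g (a + ((k - B - 1 : ℕ) : ZMod c)) := by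
    intro k h1 h2; simp only [hh]
    rw [Nat.mod_eq_of_lt (by omega), if_neg (by omega), if_neg (by omega)]
  have hadj : ∀ k < c+1, G.Adj (h k) (h (k+1)) := by
    intro k hk
    rcases Nat.eq_zero_or_pos k with rfl | hk0
    · rw [Hu 0 (by simp), Hb 1 le_rfl (by omega), Nat.cast_one]
      exact hX (a - 1) (by rw [val_sub_one (by omega), Nat.even_iff]; omega)
    rcases Nat.lt_or_ge k B with hkB | hkB
    · rw [Hb k (by omega) (by omega), Hb (k+1) (by omega) (by omega)]
      have := (gadj (a - ((k+1 : ℕ) : ZMod c))).symm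
      rw [show a - ((k+1 : ℕ) : ZMod c) + 1 = a - (k : ZMod c) from by push_cast; ring] at this
      exact this
    rcases Nat.eq_or_lt_of_le hkB with hkB' | hkB'
    · rw [← hkB', Hb B (by omega) le_rfl, Hf (B+1) (by omega) (by omega)]
      rw [show B + 1 - B - 1 = 0 from by omega, Nat.cast_zero, add_zero, key2]
      exact hch.symm
    rcases Nat.lt_or_ge (k+1) (c+1) with hk1 | hk1
    · rw [Hf k (by omega) (by omega), Hf (k+1) (by omega) (by omega)]
      have := gadj (a + ((k - B - 1 : ℕ) : ZMod c))
      rw [show a + ((k - B - 1 : ℕ) : ZMod c) + 1 = a + ((k + 1 - B - 1 : ℕ) : ZMod c) from by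
        rw [show k + 1 - B - 1 = (k - B - 1) + 1 from by omega]; push_cast; ring] at this
      exact this
    · have hkc : k = c := by omega
      rw [hkc, Hf c (by omega) le_rfl, key3, Hu (c+1) (by simp)]
      refine (hX (b - 1) ?_).symm
      rw [val_sub_one (by omega), Nat.even_iff]
      omega
  have hper : h (c+1) = h 0 := by rw [Hu (c+1) (by simp), Hu 0 (by simp)]
  have hinj : ∀ i < c+1, ∀ j < c+1, h i = h j → i = j := by
    intro i hi j hj hij
    rcases Nat.eq_zero_or_pos i with rfl | hi0 <;> rcases Nat.eq_zero_or_pos j with rfl | hj0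
    · rfl
    · exfalso
      rw [Hu 0 (by simp)] at hij
      rcases le_or_gt j B with hjB | hjB
      · rw [Hb j (by omega) hjB] at hij; exact hu ⟨_, hij.symm⟩
      · rw [Hf j (by omega) (by omega)] at hij; exact hu ⟨_, hij.symm⟩
    · exfalso
      rw [Hu 0 (by simp)] at hij
      rcases le_or_gt i B with hiB | hiB
      · rw [Hb i (by omega) hiB] at hij; exact hu ⟨_, hij⟩
      · rw [Hf i (by omega) (by omega)] at hij; exact hu ⟨_, hij⟩
    · rcases le_or_gt i B with hiB | hiB <;> rcases le_or_gt j B with hjB | hjB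
      · rw [Hb i (by omega) hiB, Hb j (by omega) hjB] at hij
        have he := sub_right_injective (ginj hij)
        rw [ZMod.natCast_eq_natCast_iff'] at he
        have := mod_small_cases he (by omega) (by omega) (by omega)
        omega
      · rw [Hb i (by omega) hiB, Hf j (by omega) (by omega)] at hij
        have he := ginj hij
        have he2 : ((i + (j - B - 1) : ℕ) : ZMod c) = ((0 : ℕ) : ZMod c) := by
          push_cast
          linear_combination - he
        rw [ZMod.natCast_eq_natCast_iff'] at he2
        have := mod_small_cases he2 (by omega) (by omega) (by omega)
        omega
      · rw [Hf i (by omega) (by omega), Hb j (by omega) hjB] at hij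
        have he := ginj hij
        have he2 : ((j + (i - B - 1) : ℕ) : ZMod c) = ((0 : ℕ) : ZMod c) := by
          push_cast
          linear_combination he
        rw [ZMod.natCast_eq_natCast_iff'] at he2
        have := mod_small_cases he2 (by omega) (by omega) (by omega)
        omega
      · rw [Hf i (by omega) (by omega), Hf j (by omega) (by omega)] at hij
        have he := add_right_injective a (ginj hij)
        rw [ZMod.natCast_eq_natCast_iff'] at he
        have := mod_small_cases he (by omega) (by omega) (by omega)
        omega
  obtain ⟨x, p, hp, hpl⟩ := exists_cycle_of_seq h (c+1) (by omega) hadj hper hinj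
  have := hlong x p hp
  omega

lemma no_opposite (hc4 : 4 ≤ c)
    (hlong : ∀ (x : V) (p : G.Walk x x), p.IsCycle → p.length ≤ c)
    (g : ZMod c → V) (ginj : Function.Injective g)
    (gadj : ∀ z, G.Adj (g z) (g (z + 1)))
    {u : V} (hu : u ∉ Set.range g)
    (hX : ∀ z : ZMod c, Even z.val → G.Adj u (g z))
    {u' : V} (hu' : u' ∉ Set.range g) (hne : u' ≠ u)
    (h1 : G.Adj u' (g 1)) (h2 : G.Adj u' (g (-1))) : False := by
  haveI : NeZero c := ⟨by omega⟩
  set h : ℕ → V := fun k => if k % (c+2) = 0 then u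
    else if k % (c+2) = 1 then g 0
    else if k % (c+2) = 2 then g 1
    else if k % (c+2) = 3 then u'
    else g ((3 : ZMod c) - ((k % (c+2) : ℕ) : ZMod c)) with hh
  have Hu : ∀ k, k % (c+2) = 0 → h k = u := by
    intro k hk; simp only [hh]; rw [if_pos hk]
  have H1 : h 1 = g 0 := by
    simp only [hh]; rw [Nat.mod_eq_of_lt (by omega)]; norm_num
  have H2 : h 2 = g 1 := by
    simp only [hh]; rw [Nat.mod_eq_of_lt (by omega)]; norm_num
  have H3 : h 3 = u' := by
    simp only [hh]; rw [Nat.mod_eq_of_lt (by omega)]; norm_num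
  have Hr : ∀ k, 4 ≤ k → k ≤ c + 1 → h k = g ((3 : ZMod c) - (k : ZMod c)) := by
    intro k hk4 hkc
    simp only [hh]
    rw [Nat.mod_eq_of_lt (by omega), if_neg (by omega), if_neg (by omega),
      if_neg (by omega), if_neg (by omega)]
  -- alternate form with index < c
  have Hr' : ∀ k, 4 ≤ k → k ≤ c + 1 → h k = g (((c + 3 - k : ℕ) : ZMod c)) := by
    intro k hk4 hkc
    rw [Hr k hk4 hkc]
    congr 1
    rw [Nat.cast_sub (by omega)]
    push_cast [ZMod.natCast_self]
    ring
  have hadj : ∀ k < c+2, G.Adj (h k) (h (k+1)) := by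
    intro k hk
    rcases Nat.eq_zero_or_pos k with rfl | hk0
    · rw [Hu 0 (by simp), H1]
      exact hX 0 (by rw [ZMod.val_zero]; exact Even.zero)
    rcases Nat.eq_or_lt_of_le hk0 with rfl | hk1
    · rw [H1, H2]
      have := gadj 0
      rwa [zero_add] at this
    rcases Nat.eq_or_lt_of_le hk1 with rfl | hk2
    · rw [H2, H3]
      exact h1.symm
    rcases Nat.eq_or_lt_of_le hk2 with rfl | hk3
    · rw [H3, Hr 4 le_rfl (by omega)]
      rw [show (3 : ZMod c) - ((4:ℕ) : ZMod c) = -1 from by push_cast; ring]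
      exact h2
    rcases Nat.lt_or_ge (k+1) (c+2) with hkc | hkc
    · rw [Hr k (by omega) (by omega), Hr (k+1) (by omega) (by omega)]
      have := (gadj ((3:ZMod c) - ((k+1 : ℕ) : ZMod c))).symm
      rw [show (3:ZMod c) - ((k+1 : ℕ) : ZMod c) + 1 = 3 - (k : ZMod c) from by
        push_cast; ring] at this
      exact this
    · have hkc' : k = c + 1 := by omega
      rw [hkc', Hu (c+2) (by simp), Hr (c+1) (by omega) le_rfl]
      rw [show (3 : ZMod c) - ((c+1 : ℕ) : ZMod c) = ((2:ℕ) : ZMod c) from by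
        push_cast [ZMod.natCast_self]; ring]
      refine (hX _ ?_).symm
      rw [ZMod.val_natCast, Nat.mod_eq_of_lt (by omega)]
      exact even_two
  have hper : h (c+2) = h 0 := by rw [Hu (c+2) (by simp), Hu 0 (by simp)]
  -- uniform nat-index representation for the g-valued entries
  have HN : ∀ k, 1 ≤ k → k ≤ c + 1 → k ≠ 3 →
      h k = g (((if k = 1 then 0 else if k = 2 then 1 else c + 3 - k : ℕ)) : ZMod c) := by
    intro k hk1 hkc hk3
    rcases Nat.eq_or_lt_of_le hk1 with rfl | hk1'
    · rw [H1]; norm_num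
    rcases Nat.eq_or_lt_of_le hk1' with rfl | hk2'
    · rw [H2]; norm_num
    · rw [Hr' k (by omega) hkc, if_neg (by omega), if_neg (by omega)]
  have hinj : ∀ i < c+2, ∀ j < c+2, h i = h j → i = j := by
    have hNval : ∀ k, 1 ≤ k → k ≤ c + 1 → k ≠ 3 →
        (if k = 1 then 0 else if k = 2 then 1 else c + 3 - k : ℕ) < c := by
      intro k hk1 hkc hk3; split_ifs <;> omega
    intro i hi j hj hij
    by_cases hi0 : i = 0
    · by_cases hj0 : j = 0
      · omega
      · by_cases hj3 : j = 3
        · subst hi0; subst hj3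
          rw [Hu 0 (by simp), H3] at hij
          exact absurd hij.symm hne
        · subst hi0
          rw [Hu 0 (by simp), HN j (by omega) (by omega) hj3] at hij
          exact absurd ⟨_, hij.symm⟩ hu
    · by_cases hj0 : j = 0
      · by_cases hi3 : i = 3
        · subst hj0; subst hi3
          rw [H3, Hu 0 (by simp)] at hij
          exact absurd hij hne
        · subst hj0
          rw [HN i (by omega) (by omega) hi3, Hu 0 (by simp)] at hij
          exact absurd ⟨_, hij⟩ hu
      · by_cases hi3 : i = 3
        · by_cases hj3 : j = 3
          · omega
          · subst hi3
            rw [H3, HN j (by omega) (by omega) hj3] at hij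
            exact absurd ⟨_, hij.symm⟩ hu'
        · by_cases hj3 : j = 3
          · subst hj3
            rw [HN i (by omega) (by omega) hi3, H3] at hij
            exact absurd ⟨_, hij⟩ hu'
          · rw [HN i (by omega) (by omega) hi3, HN j (by omega) (by omega) hj3] at hij
            have he := ginj hij
            have hvi := hNval i (by omega) (by omega) hi3
            have hvj := hNval j (by omega) (by omega) hj3
            rw [ZMod.natCast_eq_natCast_iff', Nat.mod_eq_of_lt hvi, Nat.mod_eq_of_lt hvj] at he
            split_ifs at he <;> omega
  obtain ⟨x, p, hp, hpl⟩ := exists_cycle_of_seq h (c+2) (by omega) hadj hper hinj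
  have := hlong x p hp
  omega

end Constr

/-- Edge bound on a longest even cycle: if `G` is `F`-free with longest cycle `C`
of even length `c`, `4 ≤ c ≤ n−1`, `p(F) ≥ c/2 + 1` and `|A_{c/2}| ≥ |V(F)|`,
then `e(G[C]) ≤ ex(c/2, 𝓗) + (c/2)²`. -/
theorem stmt7 {V α : Type*} [Fintype V] [Fintype α] (F : SimpleGraph α)
    (G : SimpleGraph V) (hGF : ¬ ContainsCopy F G)
    (v : V) (w : G.Walk v v) (hw : w.IsCycle) (c : ℕ) (hlen : w.length = c)
    (hlongest : ∀ (x : V) (w' : G.Walk x x), w'.IsCycle → w'.length ≤ c)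
    (hceven : Even c) (hc4 : 4 ≤ c) (hcn : c + 1 ≤ Fintype.card V)
    (hpF : PGE F (c / 2 + 1))
    (hA : Fintype.card α
      ≤ {u | u ∉ w.support ∧ degOn G {x | x ∈ w.support} u = c / 2}.ncard) :
    edgesWithin G {x | x ∈ w.support}
      ≤ exMax (c / 2) (CoverFree F) + (c / 2) ^ 2 := by
  classical
  haveI : NeZero c := ⟨by omega⟩
  have hc2 : 2 ∣ c := hceven.two_dvd
  -- α is nonempty, otherwise F embeds trivially
  have hαne : Nonempty α := by
    by_contra hα
    rw [not_nonempty_iff] at hα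
    exact hGF ⟨fun a => (hα.false a).elim, fun a => (hα.false a).elim,
      fun a => (hα.false a).elim⟩
  set A : Set V := {u | u ∉ w.support ∧ degOn G {x | x ∈ w.support} u = c / 2} with hAdef
  obtain ⟨g, ginj, gadj, grange⟩ := cycle_to_seq hw hlen hc4
  have hnotin : ∀ u ∈ A, u ∉ Set.range g := by
    intro u hu hmem
    rw [grange] at hmem
    exact hu.1 hmem
  have hSdeg : ∀ u ∈ A, {z : ZMod c | G.Adj u (g z)}.ncard = c / 2 := by
    intro u hu
    have himg : {x ∈ ({x | x ∈ w.support} : Set V) | G.Adj u x}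
        = g '' {z : ZMod c | G.Adj u (g z)} := by
      ext x
      constructor
      · rintro ⟨hx1, hx2⟩
        rw [← grange] at hx1
        obtain ⟨z, rfl⟩ := hx1
        exact ⟨z, hx2, rfl⟩
      · rintro ⟨z, hz, rfl⟩
        exact ⟨by rw [← grange]; exact ⟨z, rfl⟩, hz⟩
    have := hu.2
    rw [degOn, himg, Set.ncard_image_of_injective _ ginj] at this
    exact this
  -- parity alternation for every vertex of A
  have halt : ∀ u ∈ A, ∀ z : ZMod c,
      G.Adj u (g z) ↔ (G.Adj u (g 0) ↔ Even z.val) := by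
    intro u hu z
    exact alt_parity hc4 hc2 {z : ZMod c | G.Adj u (g z)} (hSdeg u hu)
      (fun z hz hz1 => no_two_consecutive hc4 hlongest g ginj gadj (hnotin u hu) hz hz1) z
  -- pick u ∈ A
  have hAne : A.Nonempty := by
    apply Set.nonempty_of_ncard_ne_zero
    have := Fintype.card_pos_iff.mpr hαne
    omega
  obtain ⟨u, hu⟩ := hAne
  -- normalize g so that u is adjacent exactly to even positions
  obtain ⟨g', ginj', gadj', grange', hXu⟩ :
      ∃ g' : ZMod c → V, Function.Injective g' ∧ (∀ z, G.Adj (g' z) (g' (z + 1))) ∧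
        Set.range g' = {x | x ∈ w.support} ∧
        (∀ z : ZMod c, G.Adj u (g' z) ↔ Even z.val) := by
    by_cases h0 : G.Adj u (g 0)
    · refine ⟨g, ginj, gadj, grange, fun z => ?_⟩
      rw [halt u hu z]
      tauto
    · refine ⟨fun z => g (z + 1), fun z₁ z₂ h => by
        have := ginj h; exact add_left_injective 1 this,
        fun z => by simpa [add_assoc] using gadj (z + 1), ?_, fun z => ?_⟩
      · rw [← grange]
        ext x
        constructor
        · rintro ⟨z, rfl⟩; exact ⟨z + 1, rfl⟩
        · rintro ⟨z, rfl⟩; exact ⟨z - 1, by simp⟩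
      · rw [halt u hu (z + 1), even_val_add_one hc2]
        tauto
  have hnotin' : ∀ x ∈ A, x ∉ Set.range g' := by
    intro x hx hmem
    rw [grange'] at hmem
    exact hx.1 hmem
  -- every vertex of A is adjacent to all even positions
  have hXall : ∀ u' ∈ A, ∀ z : ZMod c, Even z.val → G.Adj u' (g' z) := by
    intro u' hu' z hz
    have halt' : ∀ y : ZMod c, G.Adj u' (g' y) ↔ (G.Adj u' (g' 0) ↔ Even y.val) := by
      intro y
      exact alt_parity hc4 hc2 {y : ZMod c | G.Adj u' (g' y)}
        (by
          have himg : {x ∈ ({x | x ∈ w.support} : Set V) | G.Adj u' x}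
              = g' '' {y : ZMod c | G.Adj u' (g' y)} := by
            ext x
            constructor
            · rintro ⟨hx1, hx2⟩
              rw [← grange'] at hx1
              obtain ⟨y, rfl⟩ := hx1
              exact ⟨y, hx2, rfl⟩
            · rintro ⟨y, hy, rfl⟩
              exact ⟨by rw [← grange']; exact ⟨y, rfl⟩, hy⟩
          have := hu'.2
          rw [degOn, himg, Set.ncard_image_of_injective _ ginj'] at this
          exact this)
        (fun y hy hy1 => no_two_consecutive hc4 hlongest g' ginj' gadj'
          (hnotin' u' hu') hy hy1) y
    by_cases h0 : G.Adj u' (g' 0)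
    · rw [halt' z]; tauto
    · exfalso
      have hodd : ∀ y : ZMod c, ¬ Even y.val → G.Adj u' (g' y) := by
        intro y hy
        rw [halt' y]
        tauto
      have hne : u' ≠ u := by
        intro h
        subst h
        exact h0 ((hXu 0).mpr (by rw [ZMod.val_zero]; exact Even.zero))
      refine no_opposite hc4 hlongest g' ginj' gadj' (hnotin' u hu)
        (fun y hy => (hXu y).mpr hy) (hnotin' u' hu') hne (hodd 1 ?_) (hodd (-1) ?_)
      · rw [show (1 : ZMod c) = ((1:ℕ) : ZMod c) from by push_cast; rfl,
          ZMod.val_natCast, Nat.mod_eq_of_lt (by omega)]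
        simp
      · rw [show (-1 : ZMod c) = ((c - 1 :ℕ) : ZMod c) from by
          rw [Nat.cast_sub (by omega), ZMod.natCast_self, Nat.cast_one]; ring,
          ZMod.val_natCast, Nat.mod_eq_of_lt (by omega), Nat.even_sub (by omega)]
        simp [Nat.even_iff]
        omega
  -- no edges between odd positions
  have hnoY : ∀ z z' : ZMod c, ¬ Even z.val → ¬ Even z'.val → ¬ G.Adj (g' z) (g' z') := by
    intro z z' hz hz' hadj
    by_cases hzz : z = z'
    · subst hzz
      exact G.irrefl hadj
    · exact no_odd_chord hc4 hc2 hlongest g' ginj' gadj' (hnotin' u hu)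
        (fun y hy => (hXu y).mpr hy) hz hz' hzz hadj
  -- the induced graph on even positions
  set emb : Fin (c / 2) → V := fun i => g' (((2 * i.val : ℕ) : ZMod c)) with hemb
  have hembval : ∀ i : Fin (c / 2), (((2 * i.val : ℕ) : ZMod c)).val = 2 * i.val := by
    intro i
    rw [ZMod.val_natCast, Nat.mod_eq_of_lt (by have := i.isLt; omega)]
  have embinj : Function.Injective emb := by
    intro i j h
    have h2 := ginj' h
    rw [ZMod.natCast_eq_natCast_iff'] at h2
    rw [Nat.mod_eq_of_lt (by have := i.isLt; omega),
      Nat.mod_eq_of_lt (by have := j.isLt; omega)] at h2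
    exact Fin.ext (by omega)
  have hembA : ∀ x ∈ A, ∀ i, G.Adj x (emb i) := by
    intro x hx i
    exact hXall x hx _ (by rw [hembval i]; exact even_two_mul _)
  have hembnotA : ∀ x ∈ A, ∀ i, x ≠ emb i := by
    intro x hx i h
    exact hnotin' x hx ⟨_, h.symm⟩
  set H : SimpleGraph (Fin (c / 2)) := SimpleGraph.comap emb G with hH
  have hHadj : ∀ i j, H.Adj i j ↔ G.Adj (emb i) (emb j) := fun _ _ => Iff.rfl
  -- H is CoverFree
  have hcover : CoverFree F H := by
    rintro S hS ⟨f, finj, fadj⟩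
    haveI : Fintype ↥A := (Set.toFinite A).fintype
    have hcard : Fintype.card α ≤ Fintype.card ↥A := by
      rwa [← Set.toFinset_card, ← Set.ncard_eq_toFinset_card'] at *
    obtain ⟨eA⟩ := Function.Embedding.nonempty_of_card_le hcard
    refine hGF ⟨fun a => if h : a ∈ S then emb (f ⟨a, h⟩) else (eA a : V), ?_, ?_⟩
    · intro a b hab
      dsimp only at hab
      by_cases ha : a ∈ S <;> by_cases hb : b ∈ S
      · rw [dif_pos ha, dif_pos hb] at hab
        have := finj (embinj hab)
        exact congrArg Subtype.val this
      · rw [dif_pos ha, dif_neg hb] at hab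
        exact absurd hab.symm (hembnotA _ (eA b).2 _)
      · rw [dif_neg ha, dif_pos hb] at hab
        exact absurd hab (hembnotA _ (eA a).2 _)
      · rw [dif_neg ha, dif_neg hb] at hab
        have : eA a = eA b := Subtype.ext hab
        exact eA.injective this
    · intro a b hadj
      dsimp only
      by_cases ha : a ∈ S <;> by_cases hb : b ∈ S
      · rw [dif_pos ha, dif_pos hb]
        exact fadj (by simpa using hadj)
      · rw [dif_pos ha, dif_neg hb]
        exact (hembA _ (eA b).2 _).symm
      · rw [dif_neg ha, dif_pos hb]
        exact hembA _ (eA a).2 _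
      · exact absurd hadj (hS a b ha hb)
  -- edgeCount H is at most the extremal number
  have hex : edgeCount H ≤ exMax (c / 2) (CoverFree F) := by
    apply le_csSup
    · refine ⟨Nat.card (Sym2 (Fin (c / 2))), ?_⟩
      rintro m ⟨G', _, rfl⟩
      rw [edgeCount, ← Set.ncard_univ]
      exact Set.ncard_le_ncard (Set.subset_univ _) (Set.toFinite _)
    · exact ⟨H, hcover, rfl⟩
  -- counting
  set embY : Fin (c / 2) → V := fun j => g' (((2 * j.val + 1 : ℕ) : ZMod c)) with hembY
  have hembYval : ∀ j : Fin (c / 2), (((2 * j.val + 1 : ℕ) : ZMod c)).val = 2 * j.val + 1 := by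
    intro j
    rw [ZMod.val_natCast, Nat.mod_eq_of_lt (by have := j.isLt; omega)]
  have hrep : ∀ x ∈ Set.range g', (∃ i, x = emb i) ∨ (∃ j, x = embY j) := by
    rintro _ ⟨z, rfl⟩
    have hzlt := z.val_lt
    by_cases hz : Even z.val
    · left
      obtain ⟨t, ht⟩ := hz
      refine ⟨⟨t, by omega⟩, ?_⟩
      rw [hemb]
      exact (congrArg g' (show (((2 * t : ℕ)) : ZMod c) = z by
        rw [show 2 * t = z.val from by omega, ZMod.natCast_zmod_val])).symm
    · right
      rw [Nat.not_even_iff] at hz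
      refine ⟨⟨z.val / 2, by omega⟩, ?_⟩
      rw [hembY]
      exact (congrArg g' (show (((2 * (z.val / 2) + 1 : ℕ)) : ZMod c) = z by
        rw [show 2 * (z.val / 2) + 1 = z.val from by omega, ZMod.natCast_zmod_val])).symm
  have hnoYY : ∀ j j' : Fin (c / 2), ¬ G.Adj (embY j) (embY j') := by
    intro j j'
    exact hnoY _ _ (by rw [hembYval, Nat.even_iff]; omega)
      (by rw [hembYval, Nat.even_iff]; omega)
  set X : Set (Sym2 V) := {e ∈ G.edgeSet | ∀ x ∈ e, x ∈ {x | x ∈ w.support}} with hXdef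
  set P : Set (Sym2 V) := {e | ∀ x ∈ e, x ∈ Set.range emb} with hP
  have hsplit : X.ncard ≤ (X ∩ P).ncard + (X \ P).ncard := by
    conv_lhs => rw [← Set.inter_union_diff X P]
    exact Set.ncard_union_le _ _
  have h1 : (X ∩ P) ⊆ Sym2.map emb '' H.edgeSet := by
    intro e
    induction e using Sym2.ind with
    | _ x y =>
      rintro ⟨⟨he, _⟩, hPe⟩
      obtain ⟨i, hix⟩ := hPe x (by simp)
      obtain ⟨j, hjy⟩ := hPe y (by simp)
      refine ⟨s(i, j), ?_, ?_⟩
      · rw [SimpleGraph.mem_edgeSet, hHadj, hix, hjy]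
        exact he
      · rw [Sym2.map_pair_eq, hix, hjy]
  have hb1 : (X ∩ P).ncard ≤ edgeCount H :=
    (Set.ncard_le_ncard h1 (Set.toFinite _)).trans (Set.ncard_image_le (Set.toFinite _))
  have h2 : (X \ P) ⊆
      (fun p : Fin (c / 2) × Fin (c / 2) => s(emb p.1, embY p.2)) '' Set.univ := by
    intro e
    induction e using Sym2.ind with
    | _ x y =>
      rintro ⟨⟨he, hcvxe⟩, hPe⟩
      rw [SimpleGraph.mem_edgeSet] at he
      have hx : x ∈ Set.range g' := by rw [grange']; exact hcvxe x (by simp)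
      have hy : y ∈ Set.range g' := by rw [grange']; exact hcvxe y (by simp)
      rcases hrep x hx with ⟨i, rfl⟩ | ⟨j, rfl⟩ <;> rcases hrep y hy with ⟨i', rfl⟩ | ⟨j', rfl⟩
      · exact absurd (by
          intro t ht
          rw [Sym2.mem_iff] at ht
          rcases ht with rfl | rfl
          · exact ⟨i, rfl⟩
          · exact ⟨i', rfl⟩) hPe
      · exact ⟨(i, j'), trivial, rfl⟩
      · exact ⟨(i', j), trivial, Sym2.eq_swap⟩
      · exact absurd he (hnoYY j j')
  have hb2 : (X \ P).ncard ≤ (c / 2) ^ 2 := by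
    refine (Set.ncard_le_ncard h2 (Set.toFinite _)).trans ?_
    refine (Set.ncard_image_le (Set.toFinite _)).trans ?_
    rw [Set.ncard_univ, Nat.card_eq_fintype_card, Fintype.card_prod, Fintype.card_fin, sq]
  show X.ncard ≤ exMax (c / 2) (CoverFree F) + (c / 2) ^ 2
  have := add_le_add_right hex ((c / 2) ^ 2)
  omega
end

section
/- Let F be a graph and let G be an F-free graph on n vertices. Let C be a longest cycle of G of length c, where c is odd, 3 ≤ c ≤ n−1, and p(F) ≥ ⌊c/2⌋ + 1. If |A_{⌊c/2⌋}| ≥ c·|V(F)|, where A_{⌊c/2⌋} = {u ∈ V(G)∖V(C) : d_C(u) = ⌊c/2⌋}, then e(G[C]) ≤ ex(⌊c/2⌋, 𝓗) + ⌊c/2⌋·⌈c/2⌉ + 1, where 𝓗 = {F[S] : S is a vertex covering of F}. -/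
open SimpleGraph

open SimpleGraph

section CycleSeq
variable {V : Type*} {G : SimpleGraph V}

lemma exists_walk_seq_s8 (G : SimpleGraph V) (ψ : ℕ → V) :
    ∀ j, (∀ i, i < j → G.Adj (ψ i) (ψ (i+1))) →
      ∃ p : G.Walk (ψ j) (ψ 0), p.support = ((List.range (j+1)).reverse.map ψ) ∧
        p.length = j ∧ ∀ e ∈ p.edges, ∃ i, i < j ∧ e = s(ψ (i+1), ψ i)
  | 0, _ => ⟨Walk.nil, by simp [List.range_succ], by simp, by simp⟩
  | (j+1), h => by
      obtain ⟨p, hs, hl, he⟩ := exists_walk_seq_s8 G ψ j (fun i hi => h i (by omega))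
      refine ⟨Walk.cons (h j (by omega)).symm p, ?_, ?_, ?_⟩
      · rw [Walk.support_cons, hs]
        simp [List.range_succ]
      · simp [hl]
      · intro e hee
        rw [Walk.edges_cons, List.mem_cons] at hee
        rcases hee with rfl | hee
        · exact ⟨j, by omega, rfl⟩
        · obtain ⟨i, hi, hei⟩ := he e hee
          exact ⟨i, by omega, hei⟩

lemma exists_cycle_seq (G : SimpleGraph V) (ψ : ℕ → V) (m : ℕ) (hm : 3 ≤ m)
    (hinj : ∀ i, i < m → ∀ j, j < m → ψ i = ψ j → i = j)
    (hadj : ∀ i, i + 1 < m → G.Adj (ψ i) (ψ (i+1)))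
    (hcl : G.Adj (ψ (m-1)) (ψ 0)) :
    ∃ (x : V) (w' : G.Walk x x), w'.IsCycle ∧ w'.length = m := by
  obtain ⟨p, hs, hl, he⟩ := exists_walk_seq_s8 G ψ (m-1) (fun i hi => hadj i (by omega))
  have hpath : p.IsPath := by
    rw [Walk.isPath_def, hs]
    refine List.Nodup.map_on ?_ (by simp [List.nodup_range])
    intro x hx y hy hxy
    rw [List.mem_reverse, List.mem_range] at hx hy
    exact hinj x (by omega) y (by omega) hxy
  have hne : s(ψ 0, ψ (m-1)) ∉ p.edges := by
    intro hmem
    obtain ⟨i, hi, hei⟩ := he _ hmem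
    rw [Sym2.eq_iff] at hei
    rcases hei with ⟨h1, h2⟩ | ⟨h1, h2⟩
    · have := hinj 0 (by omega) (i+1) (by omega) h1
      omega
    · have e1 := hinj 0 (by omega) i (by omega) h1
      have e2 := hinj (m-1) (by omega) (i+1) (by omega) h2
      omega
  refine ⟨ψ 0, Walk.cons hcl.symm p, Path.cons_isCycle ⟨p, hpath⟩ hcl.symm hne, ?_⟩
  simp [hl]; omega

end CycleSeq

section NatComb

lemma boundLemma : ∀ l a (B : Finset ℕ), (∀ j ∈ B, a ≤ j ∧ j ≤ a + l) →
    (∀ j, ¬(j ∈ B ∧ j + 1 ∈ B)) → B.card ≤ l / 2 + 1 := by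
  intro l
  induction l using Nat.strong_induction_on with
  | _ l IH =>
    intro a B hB hnc
    rcases B.eq_empty_or_nonempty with rfl | hne
    · simp
    · set b := B.min' hne with hb
      have hbB : b ∈ B := B.min'_mem hne
      have hmin : ∀ j ∈ B, b ≤ j := fun j hj => B.min'_le j hj
      have hB' : ∀ j ∈ B.erase b, b + 2 ≤ j ∧ j ≤ a + l := by
        intro j hj
        rw [Finset.mem_erase] at hj
        obtain ⟨hjb, hjB⟩ := hj
        have h1 := hmin j hjB
        have h2 := (hB j hjB).2
        refine ⟨?_, h2⟩
        rcases Nat.lt_or_ge j (b+2) with h | h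
        · have hj2 : j = b ∨ j = b + 1 := by omega
          rcases hj2 with rfl | rfl
          · omega
          · exact absurd ⟨hbB, hjB⟩ (hnc b)
        · exact h
      rcases Nat.lt_or_ge (a + l) (b + 2) with h | h
      · have hemp : B.erase b = ∅ := by
          rw [Finset.eq_empty_iff_forall_notMem]
          intro j hj
          have := hB' j hj
          omega
        have h0 : B.card - 1 = 0 := by
          rw [← Finset.card_erase_of_mem hbB, hemp, Finset.card_empty]
        omega
      · have hab : a ≤ b := (hB b hbB).1
        have hl2 : 2 ≤ l := by omega
        have hcard := IH (a + l - (b+2)) (by omega) (b+2) (B.erase b)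
          (fun j hj => ⟨(hB' j hj).1, by have := (hB' j hj).2; omega⟩)
          (fun j hj => hnc j ⟨Finset.mem_of_mem_erase hj.1, Finset.mem_of_mem_erase hj.2⟩)
        have hce := Finset.card_erase_of_mem hbB
        have : a + l - (b+2) ≤ l - 2 := by omega
        have : (a + l - (b+2)) / 2 ≤ (l-2)/2 := Nat.div_le_div_right this
        have hcb : 1 ≤ B.card := Finset.card_pos.mpr hne
        omega

lemma uniqLemma : ∀ m a (B : Finset ℕ), (∀ j ∈ B, a ≤ j ∧ j ≤ a + 2*m) →
    (∀ j, ¬(j ∈ B ∧ j + 1 ∈ B)) → m + 1 ≤ B.card →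
    ∀ j, (j ∈ B ↔ ∃ k, k ≤ m ∧ j = a + 2*k) := by
  intro m
  induction m with
  | zero =>
    intro a B hB hnc hcard j
    have hne : B.Nonempty := Finset.card_pos.mp (by omega)
    obtain ⟨b, hbB⟩ := hne
    have hba : b = a := by have := hB b hbB; omega
    constructor
    · intro hj
      have := hB j hj
      exact ⟨0, le_refl 0, by omega⟩
    · rintro ⟨k, hk, rfl⟩
      have : a + 2*k = b := by omega
      rw [this]; exact hbB
  | succ n IH =>
    intro a B hB hnc hcard j
    have haB : a ∈ B := by
      by_contra ha
      have := boundLemma (2*n+1) (a+1) B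
        (fun j hj => by have h1 := hB j hj; have : j ≠ a := fun h => ha (h ▸ hj); omega)
        hnc
      omega
    have ha1 : a + 1 ∉ B := fun h => hnc a ⟨haB, h⟩
    have hIH := IH (a+2) (B.erase a)
      (by
        intro j hj
        rw [Finset.mem_erase] at hj
        have h1 := hB j hj.2
        have : j ≠ a + 1 := fun h => ha1 (h ▸ hj.2)
        constructor <;> omega)
      (fun j hj => hnc j ⟨Finset.mem_of_mem_erase hj.1, Finset.mem_of_mem_erase hj.2⟩)
      (by rw [Finset.card_erase_of_mem haB]; omega)
    constructor
    · intro hj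
      rcases eq_or_ne j a with rfl | hja
      · exact ⟨0, by omega, by omega⟩
      · obtain ⟨k, hk, rfl⟩ := (hIH j).mp (Finset.mem_erase.mpr ⟨hja, hj⟩)
        exact ⟨k+1, by omega, by omega⟩
    · rintro ⟨k, hk, rfl⟩
      rcases Nat.eq_zero_or_pos k with rfl | hkpos
      · simpa using haB
      · have : a + 2*k = (a+2) + 2*(k-1) := by omega
        rw [this]
        exact Finset.mem_of_mem_erase ((hIH _).mpr ⟨k-1, by omega, rfl⟩)

end NatComb

section MainAux
variable {V : Type*} {G : SimpleGraph V}

lemma cast_window {c : ℕ} [NeZero c] {x y : ℕ} (hxy : (x : ZMod c) = y)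
    (h1 : y < x + c) (h2 : x < y + c) : x = y := by
  rw [ZMod.natCast_eq_natCast_iff] at hxy
  rcases le_total x y with h | h
  · have hd := (Nat.modEq_iff_dvd' h).mp hxy
    have := Nat.eq_zero_of_dvd_of_lt hd (by omega)
    omega
  · have hd := (Nat.modEq_iff_dvd' h).mp hxy.symm
    have := Nat.eq_zero_of_dvd_of_lt hd (by omega)
    omega

lemma no_consec {c m : ℕ} (hc : c = 2*m+1) (hm : 1 ≤ m) [NeZero c]
    (φ : ZMod c → V) (hφinj : Function.Injective φ)
    (hφadj : ∀ k, G.Adj (φ k) (φ (k+1)))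
    (hnolong : ∀ (x : V) (w' : G.Walk x x), w'.IsCycle → w'.length ≤ c)
    (u : V) (hu : u ∉ Set.range φ) (k : ZMod c)
    (h1 : G.Adj u (φ k)) (h2 : G.Adj u (φ (k+1))) : False := by
  set ψ : ℕ → V := fun i => if i = 0 then u else φ (k + (i : ℕ)) with hψ
  have hinj : ∀ i, i < c+1 → ∀ j, j < c+1 → ψ i = ψ j → i = j := by
    intro i hi j hj hij
    by_cases hi0 : i = 0 <;> by_cases hj0 : j = 0
    · omega
    · exfalso; apply hu; rw [hψ] at hij; simp [hi0, hj0] at hij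
      exact ⟨_, hij.symm⟩
    · exfalso; apply hu; rw [hψ] at hij; simp [hi0, hj0] at hij
      exact ⟨_, hij⟩
    · rw [hψ] at hij; simp only [hi0, hj0, if_neg, ite_false] at hij
      have := add_left_cancel (hφinj hij)
      exact cast_window this (by omega) (by omega)
  have hadj : ∀ i, i + 1 < c + 1 → G.Adj (ψ i) (ψ (i+1)) := by
    intro i hi
    by_cases hi0 : i = 0
    · subst hi0; simpa [hψ] using h2
    · have : ψ i = φ (k + (i:ℕ)) := by simp [hψ, hi0]
      rw [this]
      have : ψ (i+1) = φ ((k + (i:ℕ)) + 1) := by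
        simp only [hψ]; rw [if_neg (by omega)]; push_cast; ring_nf
      rw [this]; exact hφadj _
  have hcl : G.Adj (ψ (c+1-1)) (ψ 0) := by
    have h0 : ψ 0 = u := by simp [hψ]
    have hcc : ψ (c+1-1) = φ k := by
      simp only [hψ, Nat.add_sub_cancel]
      rw [if_neg (by omega), ZMod.natCast_self, add_zero]
    rw [h0, hcc]; exact h1.symm
  obtain ⟨x, w', hcyc, hlen⟩ := exists_cycle_seq G ψ (c+1) (by omega) hinj hadj hcl
  have := hnolong x w' hcyc
  omega

lemma struct_lemma {c m : ℕ} (hc : c = 2*m+1) (hm : 1 ≤ m) [NeZero c]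
    (φ : ZMod c → V) (hφinj : Function.Injective φ)
    (hφadj : ∀ k, G.Adj (φ k) (φ (k+1)))
    (hnolong : ∀ (x : V) (w' : G.Walk x x), w'.IsCycle → w'.length ≤ c)
    (u : V) (hu : u ∉ Set.range φ)
    (hdeg : degOn G (Set.range φ) u = m) :
    ∃ g : ZMod c, ∀ k : ZMod c,
      (G.Adj u (φ k) ↔ ∃ j : ℕ, Even j ∧ 2 ≤ j ∧ j ≤ 2*m ∧ k = g + (j : ZMod c)) := by
  classical
  have hNc : ∀ k, ¬ (G.Adj u (φ k) ∧ G.Adj u (φ (k+1))) := by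
    rintro k ⟨ha, hb⟩
    exact no_consec hc hm φ hφinj hφadj hnolong u hu k ha hb
  set Nu : Finset (ZMod c) := Finset.univ.filter (fun k => G.Adj u (φ k)) with hNu
  have hNumem : ∀ k, k ∈ Nu ↔ G.Adj u (φ k) := by intro k; simp [hNu]
  have hNucard : Nu.card = m := by
    have hset : {x | x ∈ Set.range φ ∧ G.Adj u x} = φ '' (Nu : Set (ZMod c)) := by
      ext x
      constructor
      · rintro ⟨⟨k, rfl⟩, hadj⟩
        exact ⟨k, Finset.mem_coe.mpr ((hNumem k).mpr hadj), rfl⟩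
      · rintro ⟨k, hk, rfl⟩
        exact ⟨⟨k, rfl⟩, (hNumem k).mp (Finset.mem_coe.mp hk)⟩
    rw [degOn, hset, Set.ncard_image_of_injective _ hφinj, Set.ncard_coe_finset] at hdeg
    exact hdeg
  have hgap : ∃ g : ZMod c, g ∉ Nu ∧ g + 1 ∉ Nu := by
    by_contra h
    push_neg at h
    have hmaps : ∀ x ∈ Nuᶜ, x + 1 ∈ Nu := by
      intro x hx; exact h x (Finset.mem_compl.mp hx)
    have hinj2 : Set.InjOn (fun x : ZMod c => x + 1) ↑(Nuᶜ) := by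
      intro x _ y _ hxy; exact add_right_cancel hxy
    have hle := Finset.card_le_card_of_injOn _ hmaps hinj2
    rw [Finset.card_compl] at hle
    have hcard : Fintype.card (ZMod c) = c := ZMod.card c
    omega
  obtain ⟨g, hg0, hg1⟩ := hgap
  set B : Finset ℕ := (Finset.range c).filter (fun j => g + (j : ZMod c) ∈ Nu) with hB
  have hBmem : ∀ j, j ∈ B ↔ (j < c ∧ g + (j : ZMod c) ∈ Nu) := by
    intro j; simp [hB]
  have hBcard : B.card = m := by
    rw [← hNucard]
    refine Finset.card_bij (fun j _ => g + (j : ZMod c)) ?_ ?_ ?_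
    · intro j hj; exact ((hBmem j).mp hj).2
    · intro j hj j' hj' heq
      have hj1 := ((hBmem j).mp hj).1
      have hj2 := ((hBmem j').mp hj').1
      exact cast_window (add_left_cancel heq) (by omega) (by omega)
    · intro k hk
      have hkg : g + (((k - g).val : ℕ) : ZMod c) = k := by
        rw [ZMod.natCast_val, ZMod.cast_id, add_comm, sub_add_cancel]
      refine ⟨(k - g).val, (hBmem _).mpr ⟨ZMod.val_lt _, ?_⟩, hkg⟩
      rw [hkg]; exact hk
  have hBbounds : ∀ j ∈ B, 2 ≤ j ∧ j ≤ 2 + 2*(m-1) := by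
    intro j hj
    obtain ⟨hjc, hjN⟩ := (hBmem j).mp hj
    have hj0 : j ≠ 0 := by
      rintro rfl
      apply hg0; simpa using hjN
    have hj1 : j ≠ 1 := by
      rintro rfl
      apply hg1; simpa using hjN
    omega
  have hBnc : ∀ j, ¬(j ∈ B ∧ j + 1 ∈ B) := by
    rintro j ⟨h1, h2⟩
    apply hNc (g + (j : ZMod c))
    constructor
    · exact (hNumem _).mp ((hBmem j).mp h1).2
    · have hcast : g + ((j+1 : ℕ) : ZMod c) = (g + (j : ZMod c)) + 1 := by push_cast; ring
      have := (hNumem _).mp ((hBmem (j+1)).mp h2).2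
      rwa [hcast] at this
  have huniq := uniqLemma (m-1) 2 B hBbounds hBnc (by omega)
  refine ⟨g, fun k => ?_⟩
  constructor
  · intro hadj
    have hk : k ∈ Nu := (hNumem k).mpr hadj
    have hjc : (k - g).val < c := ZMod.val_lt _
    have hkg : g + (((k - g).val : ℕ) : ZMod c) = k := by
      rw [ZMod.natCast_val, ZMod.cast_id, add_comm, sub_add_cancel]
    have hjB : (k - g).val ∈ B := (hBmem _).mpr ⟨hjc, by rw [hkg]; exact hk⟩
    obtain ⟨k', hk', hjeq⟩ := (huniq _).mp hjB
    exact ⟨(k - g).val, ⟨k'+1, by omega⟩, by omega, by omega, hkg.symm⟩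
  · rintro ⟨j, hje, hj2, hjm, rfl⟩
    have hjB : j ∈ B := by
      apply (huniq j).mpr
      obtain ⟨t, ht⟩ := hje
      exact ⟨(j-2)/2, by omega, by omega⟩
    exact (hNumem _).mp ((hBmem j).mp hjB).2

end MainAux

section Chord
variable {V : Type*} {G : SimpleGraph V}

lemma chord_core {c m : ℕ} (hc : c = 2*m+1) (hm : 1 ≤ m) [NeZero c]
    (φ : ZMod c → V) (hφinj : Function.Injective φ)
    (hφadj : ∀ k, G.Adj (φ k) (φ (k+1)))
    (hnolong : ∀ (x : V) (w' : G.Walk x x), w'.IsCycle → w'.length ≤ c)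
    (u : V) (hu : u ∉ Set.range φ) (g : ZMod c)
    (huc : ∀ k : ZMod c, G.Adj u (φ k) ↔ ∃ j : ℕ, Even j ∧ 2 ≤ j ∧ j ≤ 2*m ∧ k = g + (j : ZMod c))
    (i j : ℕ) (hij : i < j) (hjc : j < c)
    (hiT : i = 0 ∨ Odd i) (hjT : Odd j)
    (hnot : ¬(i = 0 ∧ j = 1))
    (hadjpq : G.Adj (φ (g + (i : ZMod c))) (φ (g + (j : ZMod c)))) : False := by
  obtain ⟨r, hr⟩ := hjT
  have hj2m : j ≤ 2*m - 1 := by omega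
  rcases hiT with hi0 | ⟨s, hs⟩
  · -- Case B : i = 0, j odd ≥ 3
    subst hi0
    have hj3 : 3 ≤ j := by omega
    set offB : ℕ → ℕ := fun t => if t = 0 then 0 else if t ≤ c - j then j + (t-1) else c+1-t
      with hoffB
    set ψ : ℕ → V := fun t => if t = c - j + 1 then u else φ (g + ((offB t : ℕ) : ZMod c))
      with hψ
    have hbound : ∀ t, t ≤ c → t ≠ c - j + 1 → offB t ≤ c - 1 := by
      intro t ht hne; simp only [hoffB]; split_ifs <;> omega
    have hoinj : ∀ t, t ≤ c → ∀ t', t' ≤ c → t ≠ c-j+1 → t' ≠ c-j+1 →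
        offB t = offB t' → t = t' := by
      intro t ht t' ht' h1 h2 he; simp only [hoffB] at he; split_ifs at he <;> omega
    have hinj : ∀ a, a < c+1 → ∀ b, b < c+1 → ψ a = ψ b → a = b := by
      intro a ha b hb hab
      by_cases ha0 : a = c-j+1 <;> by_cases hb0 : b = c-j+1
      · omega
      · exfalso; apply hu; rw [hψ] at hab; simp only [ha0, if_pos, if_neg hb0, ite_true] at hab
        exact ⟨_, hab.symm⟩
      · exfalso; apply hu; rw [hψ] at hab; simp only [hb0, if_pos, if_neg ha0, ite_true] at hab
        exact ⟨_, hab⟩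
      · rw [hψ] at hab; simp only [if_neg ha0, if_neg hb0] at hab
        have hcast := add_left_cancel (hφinj hab)
        have h1 := hbound a (by omega) ha0
        have h2 := hbound b (by omega) hb0
        have := cast_window hcast (by omega) (by omega)
        exact hoinj a (by omega) b (by omega) ha0 hb0 this
    have hadj : ∀ t, t + 1 < c + 1 → G.Adj (ψ t) (ψ (t+1)) := by
      intro t ht
      rcases Nat.lt_or_ge t (c - j) with h1 | h1
      · -- t < c - j : from 0 ascending, includes chord at t = 0
        have hne1 : t ≠ c-j+1 := by omega
        have hne2 : t+1 ≠ c-j+1 := by omega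
        rw [hψ]; simp only [if_neg hne1, if_neg hne2]
        rcases Nat.eq_zero_or_pos t with rfl | htpos
        · have e0 : offB 0 = 0 := by simp [hoffB]
          have e1 : offB 1 = j := by
            simp only [hoffB]; rw [if_neg (by omega), if_pos (by omega)]; omega
          rw [e0, e1]
          simpa using hadjpq
        · have e0 : offB t = j + (t-1) := by
            simp only [hoffB]; rw [if_neg (by omega), if_pos (by omega)]
          have e1 : offB (t+1) = j + t := by
            simp only [hoffB]; rw [if_neg (by omega), if_pos (by omega)]; omega
          rw [e0, e1]
          have : (g + ((j + (t-1) : ℕ) : ZMod c)) + 1 = g + ((j + t : ℕ) : ZMod c) := by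
            rw [show j + t = (j + (t-1)) + 1 by omega]; push_cast; ring
          have h := hφadj (g + ((j + (t-1) : ℕ) : ZMod c))
          rwa [this] at h
      · rcases Nat.eq_or_lt_of_le h1 with h2 | h2
        · -- t = c - j : into u
          have hne1 : t ≠ c-j+1 := by omega
          rw [hψ]; simp only [if_neg hne1, if_pos (by omega : t+1 = c-j+1)]
          have e0 : offB t = c - 1 := by
            simp only [hoffB]; rw [if_neg (by omega), if_pos (by omega)]; omega
          rw [e0]
          exact ((huc _).mpr ⟨c-1, ⟨m, by omega⟩, by omega, by omega, rfl⟩).symm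
        · rcases Nat.eq_or_lt_of_le h2 with h3 | h3
          · -- t = c - j + 1 : out of u
            rw [hψ]; simp only [if_pos h3.symm, if_neg (by omega : ¬ t+1 = c-j+1)]
            have e1 : offB (t+1) = j - 1 := by
              simp only [hoffB]; rw [if_neg (by omega), if_neg (by omega)]; omega
            rw [e1]
            exact (huc _).mpr ⟨j-1, ⟨r, by omega⟩, by omega, by omega, rfl⟩
          · -- t ≥ c - j + 2 : descending
            have hne1 : t ≠ c-j+1 := by omega
            have hne2 : t+1 ≠ c-j+1 := by omega
            rw [hψ]; simp only [if_neg hne1, if_neg hne2]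
            have e0 : offB t = c+1-t := by
              simp only [hoffB]; rw [if_neg (by omega), if_neg (by omega)]
            have e1 : offB (t+1) = c-t := by
              simp only [hoffB]; rw [if_neg (by omega), if_neg (by omega)]; omega
            rw [e0, e1]
            have : (g + ((c - t : ℕ) : ZMod c)) + 1 = g + ((c + 1 - t : ℕ) : ZMod c) := by
              rw [show c + 1 - t = (c - t) + 1 by omega]; push_cast; ring
            have h := hφadj (g + ((c - t : ℕ) : ZMod c))
            rw [this] at h
            exact h.symm
    have hcl : G.Adj (ψ (c+1-1)) (ψ 0) := by
      have e0 : ψ 0 = φ (g + ((0:ℕ) : ZMod c)) := by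
        rw [hψ]; simp only [if_neg (by omega : ¬ (0:ℕ) = c-j+1)]
        have : offB 0 = 0 := by simp [hoffB]
        rw [this]
      have e1 : ψ (c+1-1) = φ (g + ((1:ℕ) : ZMod c)) := by
        simp only [Nat.add_sub_cancel]
        rw [hψ]; simp only [if_neg (by omega : ¬ c = c-j+1)]
        have : offB c = 1 := by simp only [hoffB]; rw [if_neg (by omega), if_neg (by omega)]; omega
        rw [this]
      rw [e0, e1]
      have h := hφadj (g + ((0:ℕ) : ZMod c))
      have : (g + ((0:ℕ) : ZMod c)) + 1 = g + ((1:ℕ) : ZMod c) := by push_cast; ring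
      rw [this] at h
      exact h.symm
    obtain ⟨x, w', hcyc, hlen⟩ := exists_cycle_seq G ψ (c+1) (by omega) hinj hadj hcl
    have := hnolong x w' hcyc; omega
  · -- Case A : i odd, j odd
    have hi1 : 1 ≤ i := by omega
    have hji : 2 ≤ j - i := by omega
    set offA : ℕ → ℕ := fun t => if t = 0 then i else if t ≤ j - i then j - (t-1)
      else j + (t - (j-i+1)) with hoffA
    set ψ : ℕ → V := fun t => if t = j - i + 1 then u else φ (g + ((offA t : ℕ) : ZMod c))
      with hψ
    have hbound : ∀ t, t ≤ c → t ≠ j-i+1 → i ≤ offA t ∧ offA t ≤ c + i - 1 := by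
      intro t ht hne; simp only [hoffA]; split_ifs <;> omega
    have hoinj : ∀ t, t ≤ c → ∀ t', t' ≤ c → t ≠ j-i+1 → t' ≠ j-i+1 →
        offA t = offA t' → t = t' := by
      intro t ht t' ht' h1 h2 he; simp only [hoffA] at he; split_ifs at he <;> omega
    have hinj : ∀ a, a < c+1 → ∀ b, b < c+1 → ψ a = ψ b → a = b := by
      intro a ha b hb hab
      by_cases ha0 : a = j-i+1 <;> by_cases hb0 : b = j-i+1
      · omega
      · exfalso; apply hu; rw [hψ] at hab; simp only [ha0, if_pos, if_neg hb0, ite_true] at hab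
        exact ⟨_, hab.symm⟩
      · exfalso; apply hu; rw [hψ] at hab; simp only [hb0, if_pos, if_neg ha0, ite_true] at hab
        exact ⟨_, hab⟩
      · rw [hψ] at hab; simp only [if_neg ha0, if_neg hb0] at hab
        have hcast := add_left_cancel (hφinj hab)
        have h1 := hbound a (by omega) ha0
        have h2 := hbound b (by omega) hb0
        have := cast_window hcast (by omega) (by omega)
        exact hoinj a (by omega) b (by omega) ha0 hb0 this
    have hadj : ∀ t, t + 1 < c + 1 → G.Adj (ψ t) (ψ (t+1)) := by
      intro t ht
      rcases Nat.eq_zero_or_pos t with rfl | htpos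
      · -- chord
        rw [hψ]; simp only [if_neg (by omega : ¬ (0:ℕ) = j-i+1),
          if_neg (by omega : ¬ (1:ℕ) = j-i+1)]
        have e0 : offA 0 = i := by simp [hoffA]
        have e1 : offA 1 = j := by
          simp only [hoffA]; rw [if_neg (by omega), if_pos (by omega)]; omega
        rw [e0, e1]; exact hadjpq
      rcases Nat.lt_or_ge t (j - i) with h1 | h1
      · -- descending
        have hne1 : t ≠ j-i+1 := by omega
        have hne2 : t+1 ≠ j-i+1 := by omega
        rw [hψ]; simp only [if_neg hne1, if_neg hne2]
        have e0 : offA t = j - (t-1) := by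
          simp only [hoffA]; rw [if_neg (by omega), if_pos (by omega)]
        have e1 : offA (t+1) = j - t := by
          simp only [hoffA]; rw [if_neg (by omega), if_pos (by omega)]; omega
        rw [e0, e1]
        have : (g + ((j - t : ℕ) : ZMod c)) + 1 = g + ((j - (t-1) : ℕ) : ZMod c) := by
          rw [show j - (t-1) = (j - t) + 1 by omega]; push_cast; ring
        have h := hφadj (g + ((j - t : ℕ) : ZMod c))
        rw [this] at h
        exact h.symm
      · rcases Nat.eq_or_lt_of_le h1 with h2 | h2
        · -- t = j - i : into u
          rw [hψ]; simp only [if_neg (by omega : ¬ t = j-i+1), if_pos (by omega : t+1 = j-i+1)]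
          have e0 : offA t = i + 1 := by
            simp only [hoffA]; rw [if_neg (by omega), if_pos (by omega)]; omega
          rw [e0]
          exact ((huc _).mpr ⟨i+1, ⟨s+1, by omega⟩, by omega, by omega, rfl⟩).symm
        · rcases Nat.eq_or_lt_of_le h2 with h3 | h3
          · -- t = j - i + 1 : out of u
            rw [hψ]; simp only [if_pos h3.symm, if_neg (by omega : ¬ t+1 = j-i+1)]
            have e1 : offA (t+1) = j + 1 := by
              simp only [hoffA]; rw [if_neg (by omega), if_neg (by omega)]; omega
            rw [e1]
            exact (huc _).mpr ⟨j+1, ⟨r+1, by omega⟩, by omega, by omega, rfl⟩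
          · -- ascending
            have hne1 : t ≠ j-i+1 := by omega
            have hne2 : t+1 ≠ j-i+1 := by omega
            rw [hψ]; simp only [if_neg hne1, if_neg hne2]
            have e0 : offA t = j + (t - (j-i+1)) := by
              simp only [hoffA]; rw [if_neg (by omega), if_neg (by omega)]
            have e1 : offA (t+1) = (j + (t - (j-i+1))) + 1 := by
              simp only [hoffA]; rw [if_neg (by omega), if_neg (by omega)]; omega
            rw [e0, e1]
            have : g + (((j + (t - (j-i+1))) + 1 : ℕ) : ZMod c)
                = (g + ((j + (t - (j-i+1)) : ℕ) : ZMod c)) + 1 := by push_cast; ring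
            rw [this]
            exact hφadj _
    have hcl : G.Adj (ψ (c+1-1)) (ψ 0) := by
      have e0 : ψ 0 = φ (g + ((i:ℕ) : ZMod c)) := by
        rw [hψ]; simp only [if_neg (by omega : ¬ (0:ℕ) = j-i+1)]
        have : offA 0 = i := by simp [hoffA]
        rw [this]
      have e1 : ψ (c+1-1) = φ (g + ((c+i-1 : ℕ) : ZMod c)) := by
        simp only [Nat.add_sub_cancel]
        rw [hψ]; simp only [if_neg (by omega : ¬ c = j-i+1)]
        have : offA c = c+i-1 := by
          simp only [hoffA]; rw [if_neg (by omega), if_neg (by omega)]; omega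
        rw [this]
      rw [e0, e1]
      have h := hφadj (g + ((c+i-1 : ℕ) : ZMod c))
      have : (g + ((c+i-1 : ℕ) : ZMod c)) + 1 = g + ((i:ℕ) : ZMod c) := by
        have h1 : ((c+i-1 : ℕ) : ZMod c) + 1 = ((c+i-1+1 : ℕ) : ZMod c) := by push_cast; ring
        have h2 : (c+i-1+1 : ℕ) = c + i := by omega
        rw [add_assoc, h1, h2]
        push_cast [ZMod.natCast_self]
        ring
      rw [this] at h
      exact h
    obtain ⟨x, w', hcyc, hlen⟩ := exists_cycle_seq G ψ (c+1) (by omega) hinj hadj hcl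
    have := hnolong x w' hcyc; omega

lemma chord_lemma {c m : ℕ} (hc : c = 2*m+1) (hm : 1 ≤ m) [NeZero c]
    (φ : ZMod c → V) (hφinj : Function.Injective φ)
    (hφadj : ∀ k, G.Adj (φ k) (φ (k+1)))
    (hnolong : ∀ (x : V) (w' : G.Walk x x), w'.IsCycle → w'.length ≤ c)
    (u : V) (hu : u ∉ Set.range φ) (g : ZMod c)
    (huc : ∀ k : ZMod c, G.Adj u (φ k) ↔ ∃ j : ℕ, Even j ∧ 2 ≤ j ∧ j ≤ 2*m ∧ k = g + (j : ZMod c))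
    (p q : ZMod c) (hadjpq : G.Adj (φ p) (φ q))
    (hp : ¬ G.Adj u (φ p)) (hq : ¬ G.Adj u (φ q)) :
    (p = g ∧ q = g + 1) ∨ (q = g ∧ p = g + 1) := by
  have hoff : ∀ k : ZMod c, ¬ G.Adj u (φ k) → (k - g).val = 0 ∨ Odd (k - g).val := by
    intro k hk
    by_contra hcon
    push_neg at hcon
    obtain ⟨h0, he⟩ := hcon
    rw [Nat.not_odd_iff_even] at he
    apply hk
    obtain ⟨t, ht⟩ := he
    have hvlt := ZMod.val_lt (k - g)
    refine (huc k).mpr ⟨(k - g).val, ⟨t, ht⟩, by omega, by omega, ?_⟩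
    rw [ZMod.natCast_val, ZMod.cast_id, add_comm, sub_add_cancel]
  have hpg : p = g + (((p - g).val : ℕ) : ZMod c) := by
    rw [ZMod.natCast_val, ZMod.cast_id, add_comm, sub_add_cancel]
  have hqg : q = g + (((q - g).val : ℕ) : ZMod c) := by
    rw [ZMod.natCast_val, ZMod.cast_id, add_comm, sub_add_cancel]
  have hne : p ≠ q := by
    intro h
    subst h
    exact G.loopless.irrefl _ hadjpq
  have hvne : (p - g).val ≠ (q - g).val := by
    intro h
    apply hne
    rw [hpg, hqg, h]
  have h1' : (1 : ZMod c) = ((1 : ℕ) : ZMod c) := by push_cast; ring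
  rcases lt_or_gt_of_ne hvne with hlt | hgt
  · left
    rcases hoff q hq with h0 | hodd
    · omega
    · by_cases h01 : (p - g).val = 0 ∧ (q - g).val = 1
      · constructor
        · rw [hpg, h01.1]; push_cast; ring
        · rw [hqg, h01.2, h1']
      · exfalso
        refine chord_core hc hm φ hφinj hφadj hnolong u hu g huc
          (p-g).val (q-g).val hlt (ZMod.val_lt _) (hoff p hp) hodd h01 ?_
        rw [← hpg, ← hqg]; exact hadjpq
  · right
    rcases hoff p hp with h0 | hodd
    · omega
    · by_cases h01 : (q - g).val = 0 ∧ (p - g).val = 1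
      · constructor
        · rw [hqg, h01.1]; push_cast; ring
        · rw [hpg, h01.2, h1']
      · exfalso
        refine chord_core hc hm φ hφinj hφadj hnolong u hu g huc
          (q-g).val (p-g).val hgt (ZMod.val_lt _) (hoff q hq) hodd h01 ?_
        rw [← hpg, ← hqg]; exact hadjpq.symm

end Chord

section MainCount

lemma main_aux {V α : Type*} [Fintype V] [Fintype α] (F : SimpleGraph α) (G : SimpleGraph V)
    (hGF : ¬ ContainsCopy F G) (hα : 1 ≤ Fintype.card α)
    (c m : ℕ) (hc : c = 2*m+1) (hm : 1 ≤ m) [NeZero c]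
    (φ : ZMod c → V) (hφinj : Function.Injective φ)
    (hφadj : ∀ k, G.Adj (φ k) (φ (k+1)))
    (hnolong : ∀ (x : V) (w' : G.Walk x x), w'.IsCycle → w'.length ≤ c)
    (hA : c * Fintype.card α ≤ {u | u ∉ Set.range φ ∧ degOn G (Set.range φ) u = m}.ncard) :
    edgesWithin G (Set.range φ) ≤ exMax m (CoverFree F) + m * (m+1) + 1 := by
  classical
  set A : Set V := {u | u ∉ Set.range φ ∧ degOn G (Set.range φ) u = m} with hAdef
  have hstruct : ∀ u, u ∈ A → ∃ g : ZMod c, ∀ k : ZMod c,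
      (G.Adj u (φ k) ↔ ∃ j : ℕ, Even j ∧ 2 ≤ j ∧ j ≤ 2*m ∧ k = g + (j : ZMod c)) :=
    fun u hu => struct_lemma hc hm φ hφinj hφadj hnolong u hu.1 hu.2
  choose! gfn hgfn using hstruct
  have hAfin : A.Finite := Set.toFinite A
  have hA'card : c * Fintype.card α ≤ hAfin.toFinset.card := by
    rwa [Set.ncard_eq_toFinset_card A hAfin] at hA
  obtain ⟨g₀, -, hAu⟩ := Finset.exists_le_card_fiber_of_mul_le_card_of_maps_to
    (f := gfn) (t := (Finset.univ : Finset (ZMod c)))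
    (fun a _ => Finset.mem_univ _) ⟨0, Finset.mem_univ 0⟩
    (by rw [Finset.card_univ, ZMod.card]; exact hA'card)
  set Au : Finset V := hAfin.toFinset.filter (fun x => gfn x = g₀) with hAudef
  have hAuchar : ∀ u ∈ Au, u ∉ Set.range φ ∧ ∀ k : ZMod c,
      (G.Adj u (φ k) ↔ ∃ j : ℕ, Even j ∧ 2 ≤ j ∧ j ≤ 2*m ∧ k = g₀ + (j : ZMod c)) := by
    intro u hu
    rw [hAudef, Finset.mem_filter, Set.Finite.mem_toFinset] at hu
    exact ⟨hu.1.1, hu.2 ▸ hgfn u hu.1⟩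
  have hAucard : Fintype.card α ≤ Au.card := hAu
  have hAunotin : ∀ u ∈ Au, u ∉ Set.range φ := fun u hu => (hAuchar u hu).1
  have hAune : ∃ u₀, u₀ ∈ Au := by
    have : 0 < Au.card := by omega
    obtain ⟨u₀, hu₀⟩ := Finset.card_pos.mp this
    exact ⟨u₀, hu₀⟩
  obtain ⟨u₀, hu₀⟩ := hAune
  -- the independent-side vertex map
  set ι : Fin m → V := fun x => φ (g₀ + ((2*(x:ℕ)+2 : ℕ) : ZMod c)) with hιdef
  have hιinj : Function.Injective ι := by
    intro x y h
    have h2 := add_left_cancel (hφinj h)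
    have hx := x.2
    have hy := y.2
    have := cast_window h2 (by omega) (by omega)
    exact Fin.ext (by omega)
  have hιadj : ∀ u ∈ Au, ∀ x : Fin m, G.Adj u (ι x) := by
    intro u hu x
    have hx := x.2
    exact ((hAuchar u hu).2 _).mpr ⟨2*(x:ℕ)+2, ⟨(x:ℕ)+1, by omega⟩, by omega, by omega, rfl⟩
  have hmemN : ∀ u ∈ Au, ∀ k : ZMod c, G.Adj u (φ k) → φ k ∈ Set.range ι := by
    intro u hu k hk
    obtain ⟨j, ⟨t, ht⟩, hj2, hjm, rfl⟩ := ((hAuchar u hu).2 k).mp hk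
    refine ⟨⟨t-1, by omega⟩, ?_⟩
    show φ (g₀ + ((2*(t-1)+2 : ℕ) : ZMod c)) = φ (g₀ + (j : ZMod c))
    rw [show 2*(t-1)+2 = j by omega]
  set N : Set V := Set.range ι with hNdef
  have hNsub : N ⊆ Set.range φ := by
    rintro x ⟨y, rfl⟩
    exact ⟨_, rfl⟩
  set M' : Set V := Set.range φ \ N with hM'def
  -- edge classes
  set EN : Set (Sym2 V) := {e ∈ G.edgeSet | ∀ x ∈ e, x ∈ N} with hENdef
  set EX : Set (Sym2 V) := {e ∈ G.edgeSet | ∃ a b, e = s(a,b) ∧ a ∈ N ∧ b ∈ M'} with hEXdef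
  set EM : Set (Sym2 V) := {e ∈ G.edgeSet | ∀ x ∈ e, x ∈ M'} with hEMdef
  have hsplit : {e ∈ G.edgeSet | ∀ x ∈ e, x ∈ Set.range φ} ⊆ EN ∪ EX ∪ EM := by
    intro e
    induction e using Sym2.ind with
    | _ a b =>
      intro he
      obtain ⟨hee, hend⟩ := he
      have ha : a ∈ Set.range φ := hend a (Sym2.mem_mk_left a b)
      have hb : b ∈ Set.range φ := hend b (Sym2.mem_mk_right a b)
      by_cases haN : a ∈ N <;> by_cases hbN : b ∈ N
      · exact Or.inl (Or.inl ⟨hee, by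
          intro x hx
          rcases Sym2.mem_iff.mp hx with rfl | rfl
          exacts [haN, hbN]⟩)
      · exact Or.inl (Or.inr ⟨hee, a, b, rfl, haN, ⟨hb, hbN⟩⟩)
      · exact Or.inl (Or.inr ⟨hee, b, a, Sym2.eq_swap, hbN, ⟨ha, haN⟩⟩)
      · exact Or.inr ⟨hee, by
          intro x hx
          rcases Sym2.mem_iff.mp hx with rfl | rfl
          exacts [⟨ha, haN⟩, ⟨hb, hbN⟩]⟩
  have hsum : edgesWithin G (Set.range φ) ≤ EN.ncard + EX.ncard + EM.ncard := by
    calc edgesWithin G (Set.range φ) ≤ (EN ∪ EX ∪ EM).ncard :=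
          Set.ncard_le_ncard hsplit (Set.toFinite _)
      _ ≤ (EN ∪ EX).ncard + EM.ncard := Set.ncard_union_le _ _
      _ ≤ EN.ncard + EX.ncard + EM.ncard := by
          have := Set.ncard_union_le EN EX
          omega
  -- bound on EM
  have hEM : EM.ncard ≤ 1 := by
    have hsub : EM ⊆ {s(φ g₀, φ (g₀ + 1))} := by
      intro e
      induction e using Sym2.ind with
      | _ a b =>
        intro he
        obtain ⟨hee, hend⟩ := he
        have hA1 := hend a (Sym2.mem_mk_left a b)
        have hB1 := hend b (Sym2.mem_mk_right a b)
        obtain ⟨⟨p, hp⟩, hpN⟩ := hA1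
        obtain ⟨⟨q, hq⟩, hqN⟩ := hB1
        subst hp
        subst hq
        have hadj : G.Adj (φ p) (φ q) := hee
        have hpnot : ¬ G.Adj u₀ (φ p) := fun h => hpN (hmemN u₀ hu₀ p h)
        have hqnot : ¬ G.Adj u₀ (φ q) := fun h => hqN (hmemN u₀ hu₀ q h)
        rcases chord_lemma hc hm φ hφinj hφadj hnolong u₀ (hAunotin u₀ hu₀) g₀
          (hAuchar u₀ hu₀).2 p q hadj hpnot hqnot with ⟨rfl, rfl⟩ | ⟨rfl, rfl⟩
        · rfl
        · exact Sym2.eq_swap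
    calc EM.ncard ≤ ({s(φ g₀, φ (g₀ + 1))} : Set (Sym2 V)).ncard :=
          Set.ncard_le_ncard hsub (Set.toFinite _)
      _ = 1 := Set.ncard_singleton _
  -- bound on EX
  have hNcard : N.ncard = m := by
    rw [hNdef, ← Nat.card_coe_set_eq, Nat.card_range_of_injective hιinj,
      Nat.card_eq_fintype_card, Fintype.card_fin]
  have hφcard : (Set.range φ).ncard = c := by
    rw [← Nat.card_coe_set_eq, Nat.card_range_of_injective hφinj,
      Nat.card_eq_fintype_card, ZMod.card]
  have hM'card : M'.ncard = m + 1 := by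
    rw [hM'def, Set.ncard_diff hNsub (Set.toFinite _), hNcard, hφcard]
    omega
  have hEX : EX.ncard ≤ m * (m+1) := by
    set f : Sym2 V → V × V := fun e =>
      if h : ∃ a b, e = s(a,b) ∧ a ∈ N ∧ b ∈ M' then
        (h.choose, h.choose_spec.choose) else (u₀, u₀) with hfdef
    have hspec : ∀ e ∈ EX, e = s((f e).1, (f e).2) ∧ (f e).1 ∈ N ∧ (f e).2 ∈ M' := by
      intro e he
      have hex : ∃ a b, e = s(a,b) ∧ a ∈ N ∧ b ∈ M' := he.2
      rw [hfdef]
      simp only [dif_pos hex]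
      exact ⟨hex.choose_spec.choose_spec.1, hex.choose_spec.choose_spec.2.1,
        hex.choose_spec.choose_spec.2.2⟩
    have hle : EX.ncard ≤ (N ×ˢ M').ncard := by
      apply Set.ncard_le_ncard_of_injOn f
      · intro e he
        exact Set.mem_prod.mpr ⟨(hspec e he).2.1, (hspec e he).2.2⟩
      · intro e he e' he' hfe
        rw [(hspec e he).1, (hspec e' he').1, hfe]
    have hprod : (N ×ˢ M').ncard = N.ncard * M'.ncard := by
      rw [← Nat.card_coe_set_eq, Nat.card_congr (Equiv.Set.prod N M'), Nat.card_prod,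
        Nat.card_coe_set_eq, Nat.card_coe_set_eq]
    rw [hprod, hNcard, hM'card] at hle
    exact hle
  -- bound on EN
  have hEN : EN.ncard ≤ exMax m (CoverFree F) := by
    set G' : SimpleGraph (Fin m) := G.comap ι with hG'def
    have hnm : Nonempty (Fin m) := ⟨⟨0, by omega⟩⟩
    set κ : V → Fin m := Function.invFun ι with hκdef
    have hκι : ∀ x, κ (ι x) = x := fun x => Function.leftInverse_invFun hιinj x
    have hENle : EN.ncard ≤ edgeCount G' := by
      have hrec : ∀ e ∈ EN, Sym2.map ι (Sym2.map κ e) = e ∧ Sym2.map κ e ∈ G'.edgeSet := by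
        intro e
        induction e using Sym2.ind with
        | _ a b =>
          intro he
          obtain ⟨hee, hend⟩ := he
          have hA1 := hend a (Sym2.mem_mk_left a b)
          have hB1 := hend b (Sym2.mem_mk_right a b)
          obtain ⟨x, hx⟩ := hA1
          obtain ⟨y, hy⟩ := hB1
          subst hx
          subst hy
          constructor
          · simp [Sym2.map_pair_eq, hκι]
          · simp only [Sym2.map_pair_eq, hκι, SimpleGraph.mem_edgeSet]
            exact hee
      apply Set.ncard_le_ncard_of_injOn (Sym2.map κ)
      · intro e he; exact (hrec e he).2
      · intro e he e' he' hfe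
        rw [← (hrec e he).1, ← (hrec e' he').1, hfe]
    have hCF : CoverFree F G' := by
      rintro S₀ hcov ⟨f, hfinj, hfadj⟩
      apply hGF
      have hcard2 : Fintype.card ↥(S₀ᶜ) ≤ Fintype.card {x // x ∈ Au} := by
        rw [Fintype.card_coe]
        calc Fintype.card ↥(S₀ᶜ) ≤ Fintype.card α :=
              Fintype.card_le_of_injective _ Subtype.coe_injective
          _ ≤ Au.card := hAu
      obtain ⟨e0⟩ := Function.Embedding.nonempty_of_card_le hcard2
      set h : α → V := fun a =>
        if ha : a ∈ S₀ then ι (f ⟨a, ha⟩) else ↑(e0 ⟨a, ha⟩) with hhdef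
      have hval : ∀ (a : α) (ha : a ∉ S₀), (↑(e0 ⟨a, ha⟩) : V) ∈ Au := fun a ha => (e0 ⟨a, ha⟩).2
      refine ⟨h, ?_, ?_⟩
      · intro a b hab
        rw [hhdef] at hab
        simp only at hab
        by_cases ha : a ∈ S₀ <;> by_cases hb : b ∈ S₀
        · rw [dif_pos ha, dif_pos hb] at hab
          have := hfinj (hιinj hab)
          exact congrArg Subtype.val this
        · rw [dif_pos ha, dif_neg hb] at hab
          exact absurd (hab ▸ hNsub ⟨_, rfl⟩) (hAunotin _ (hval b hb))
        · rw [dif_neg ha, dif_pos hb] at hab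
          exact absurd (hab.symm ▸ hNsub ⟨_, rfl⟩) (hAunotin _ (hval a ha))
        · rw [dif_neg ha, dif_neg hb] at hab
          have h1 := Subtype.coe_injective hab
          have h2 := e0.injective h1
          exact congrArg Subtype.val h2
      · intro a b hab
        rw [hhdef]
        simp only
        by_cases ha : a ∈ S₀ <;> by_cases hb : b ∈ S₀
        · rw [dif_pos ha, dif_pos hb]
          have hind : (F.induce S₀).Adj ⟨a, ha⟩ ⟨b, hb⟩ := hab
          exact hfadj hind
        · rw [dif_pos ha, dif_neg hb]
          exact (hιadj _ (hval b hb) _).symm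
        · rw [dif_neg ha, dif_pos hb]
          exact hιadj _ (hval a ha) _
        · exact absurd hab (hcov a b ha hb)
    have hmem : edgeCount G' ∈ {n | ∃ G'' : SimpleGraph (Fin m), CoverFree F G'' ∧ edgeCount G'' = n} :=
      ⟨G', hCF, rfl⟩
    have hbdd : BddAbove {n | ∃ G'' : SimpleGraph (Fin m), CoverFree F G'' ∧ edgeCount G'' = n} := by
      refine ⟨Nat.card (Sym2 (Fin m)), ?_⟩
      rintro x ⟨G'', -, rfl⟩
      calc edgeCount G'' ≤ (Set.univ : Set (Sym2 (Fin m))).ncard :=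
            Set.ncard_le_ncard (Set.subset_univ _) (Set.toFinite _)
        _ = Nat.card (Sym2 (Fin m)) := Set.ncard_univ _
    calc EN.ncard ≤ edgeCount G' := hENle
      _ ≤ exMax m (CoverFree F) := le_csSup hbdd hmem
  omega

end MainCount


/-- Edge bound on a longest odd cycle: if `G` is `F`-free with longest cycle `C`
of odd length `c`, `3 ≤ c ≤ n−1`, `p(F) ≥ ⌊c/2⌋ + 1` and
`|A_{⌊c/2⌋}| ≥ c·|V(F)|`, then
`e(G[C]) ≤ ex(⌊c/2⌋, 𝓗) + ⌊c/2⌋·⌈c/2⌉ + 1`. -/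
theorem stmt8 {V α : Type*} [Fintype V] [Fintype α] (F : SimpleGraph α)
    (G : SimpleGraph V) (hGF : ¬ ContainsCopy F G)
    (v : V) (w : G.Walk v v) (hw : w.IsCycle) (c : ℕ) (hlen : w.length = c)
    (hlongest : ∀ (x : V) (w' : G.Walk x x), w'.IsCycle → w'.length ≤ c)
    (hcodd : Odd c) (hc3 : 3 ≤ c) (hcn : c + 1 ≤ Fintype.card V)
    (hpF : PGE F (c / 2 + 1))
    (hA : c * Fintype.card α
      ≤ {u | u ∉ w.support ∧ degOn G {x | x ∈ w.support} u = c / 2}.ncard) :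
    edgesWithin G {x | x ∈ w.support}
      ≤ exMax (c / 2) (CoverFree F) + (c / 2) * ((c + 1) / 2) + 1 := by
  classical
  obtain ⟨m, hm⟩ := hcodd
  have hc : c = 2*m+1 := by omega
  have hm1 : 1 ≤ m := by omega
  haveI : NeZero c := ⟨by omega⟩
  haveI : Fact (1 < c) := ⟨by omega⟩
  -- α is nonempty
  have hα : 1 ≤ Fintype.card α := by
    by_contra h
    have hemp : IsEmpty α := Fintype.card_eq_zero_iff.mp (by omega)
    have h2 := hpF (fun _ => true) (fun a _ _ => (hemp.false a).elim)
    have h3 : ({a : α | (fun _ => true) a = true} : Set α) = ∅ :=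
      Set.eq_empty_of_isEmpty _
    rw [h3, Set.ncard_empty] at h2
    omega
  -- set up the cycle indexing
  set t : List V := w.support.tail with htdef
  have hL : w.support = v :: t := w.support_eq_cons
  have tlen : t.length = c := by
    have := w.length_support
    rw [hL] at this
    simp only [List.length_cons] at this
    omega
  have tnodup : t.Nodup := hw.2
  have hchain : List.Chain G.Adj v t := by
    have h := w.isChain_adj_support
    rw [hL] at h
    exact h
  obtain ⟨hfirst, hmid⟩ : (∀ h : 0 < t.length, G.Adj v (t.get ⟨0, h⟩)) ∧
      ∀ (i : ℕ) (h : i < t.length - 1), G.Adj (t.get ⟨i, by omega⟩) (t.get ⟨i+1, by omega⟩) := by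
    have h := List.isChain_iff_getElem.mp hchain
    exact ⟨fun h0 => by simpa using h 0 (by simpa using h0), fun i hi => by
      have := h (i+1) (by simp only [List.length_cons]; omega)
      simpa only [List.getElem_cons_succ, List.get_eq_getElem] using this⟩
  have htne : t ≠ [] := by
    intro h
    rw [h] at tlen
    simp at tlen
    omega
  have hsl : w.support.length = c + 1 := by rw [w.length_support, hlen]
  have hget : ∀ (i : ℕ) (h : i < t.length),
      t.get ⟨i, h⟩ = w.support[i+1]'(by rw [hL]; simpa using Nat.succ_lt_succ h) := by
    intro i h
    simp only [hL, List.getElem_cons_succ, List.get_eq_getElem]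
  have hlastS : w.support[c]'(by omega) = v := by
    have h2 := w.getLast_support
    rw [List.getLast_eq_getElem] at h2
    convert h2 using 2
    omega
  have hlast : ∀ (h : c - 1 < t.length), t.get ⟨c-1, h⟩ = v := by
    intro h
    rw [hget (c-1) h]
    convert hlastS using 2
    omega
  set φ : ZMod c → V := fun k => t.get ⟨k.val, by rw [tlen]; exact ZMod.val_lt k⟩ with hφdef
  have hφinj : Function.Injective φ := by
    intro k k' h
    rw [hφdef] at h
    have := List.nodup_iff_injective_get.mp tnodup h
    have := Fin.mk.injEq _ _ _ _ ▸ this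
    exact ZMod.val_injective c (by simpa using this)
  have hφadj : ∀ k, G.Adj (φ k) (φ (k+1)) := by
    intro k
    have hkv : k.val < c := ZMod.val_lt k
    have hadd : (k+1).val = (k.val + 1) % c := by
      rw [ZMod.val_add, ZMod.val_one]
    rcases Nat.lt_or_ge k.val (c-1) with hlt | hge
    · have hidx : (k+1).val = k.val + 1 := by rw [hadd, Nat.mod_eq_of_lt (by omega)]
      have h := hmid k.val (by rw [tlen]; omega)
      rw [hφdef]
      simp only [hidx]
      convert h using 2
    · have hke : k.val = c - 1 := by omega
      have hidx : (k+1).val = 0 := by rw [hadd, hke, show c-1+1 = c by omega, Nat.mod_self]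
      have h0 : 0 < t.length := by rw [tlen]; omega
      have h := hfirst h0
      rw [hφdef]
      simp only [hidx, hke]
      rw [hlast]
      convert h using 2
  have hrange : {x | x ∈ w.support} = Set.range φ := by
    ext x
    simp only [Set.mem_setOf_eq, Set.mem_range]
    constructor
    · intro hx
      rw [hL, List.mem_cons] at hx
      rcases hx with rfl | hx
      · refine ⟨((c-1 : ℕ) : ZMod c), ?_⟩
        rw [hφdef]
        simp only [ZMod.val_cast_of_lt (show c-1 < c by omega)]
        exact hlast _
      · obtain ⟨⟨i, hi⟩, hget⟩ := List.mem_iff_get.mp hx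
        refine ⟨((i : ℕ) : ZMod c), ?_⟩
        rw [hφdef]
        simp only [ZMod.val_cast_of_lt (show i < c by rw [← tlen]; exact hi)]
        convert hget using 2
    · rintro ⟨k, rfl⟩
      rw [hφdef]
      rw [hL]
      exact List.mem_cons_of_mem v (List.get_mem t _)
  have hc2 : c / 2 = m := by omega
  have hc12 : (c + 1) / 2 = m + 1 := by omega
  have hmemiff : ∀ u : V, u ∈ Set.range φ ↔ u ∈ w.support := by
    intro u
    rw [← hrange]
    rfl
  have hAset : {u | u ∉ w.support ∧ degOn G {x | x ∈ w.support} u = c / 2}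
      = {u | u ∉ Set.range φ ∧ degOn G (Set.range φ) u = m} := by
    ext u
    simp only [Set.mem_setOf_eq]
    rw [hrange, hc2]
    constructor
    · rintro ⟨h1, h2⟩; exact ⟨fun hr => h1 ((hmemiff u).mp hr), h2⟩
    · rintro ⟨h1, h2⟩; exact ⟨fun hr => h1 ((hmemiff u).mpr hr), h2⟩
  rw [hAset] at hA
  rw [hrange, hc2, hc12]
  exact main_aux F G hGF hα c m hc hm1 φ hφinj hφadj hlongest hA
end

section
/- Let k ≥ 3 and let F be a 2-connected graph. Write n − 1 = p(k−2) + q with 0 ≤ q ≤ k−3. Then ex(n, {𝓒_{≥k}, F}) ≥ p·ex(k-1,F) + ex(q+1,F). Consequently, ex(n, {𝓒_{≥k}, F}) ≥ (ex(k-1,F)/(k-2))·n + O_k(1). (The lower bound is attained by the n-vertex graph consisting of p blocks, each a (k-1)-vertex F-free graph with ex(k-1,F) edges, together with one block that is a (q+1)-vertex F-free graph with ex(q+1,F) edges, all sharing a single common cut vertex; since F is 2-connected and every block has at most k−1 vertices, this graph is both F-free and 𝓒_{≥k}-free.) -/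
open SimpleGraph

section Helpers

variable {V α β γ δ : Type*}

-- generic lemmas
lemma edgeCount_le_card [Fintype V] (G : SimpleGraph V) :
    edgeCount G ≤ Fintype.card (Sym2 V) := by
  have h : G.edgeSet.ncard ≤ (Set.univ : Set (Sym2 V)).ncard :=
    Set.ncard_le_ncard (Set.subset_univ _) Set.finite_univ
  simpa [edgeCount, Set.ncard_univ, Nat.card_eq_fintype_card] using h

lemma le_exMax {n : ℕ} {P : SimpleGraph (Fin n) → Prop} (G : SimpleGraph (Fin n))
    (h : P G) : edgeCount G ≤ exMax n P := by
  apply le_csSup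
  · exact ⟨Fintype.card (Sym2 (Fin n)), by rintro m ⟨G', -, rfl⟩; exact edgeCount_le_card G'⟩
  · exact ⟨G, h, rfl⟩

lemma exMax_exists {n : ℕ} {P : SimpleGraph (Fin n) → Prop} (h : ∃ G, P G) :
    ∃ G : SimpleGraph (Fin n), P G ∧ edgeCount G = exMax n P := by
  obtain ⟨G0, hG0⟩ := h
  have := Nat.sSup_mem (s := {m | ∃ G : SimpleGraph (Fin n), P G ∧ edgeCount G = m})
    ⟨edgeCount G0, G0, hG0, rfl⟩
    ⟨Fintype.card (Sym2 (Fin n)), by rintro m ⟨G', -, rfl⟩; exact edgeCount_le_card G'⟩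
  exact this

lemma edgeCount_fin_one (G : SimpleGraph (Fin 1)) : edgeCount G = 0 := by
  have : G.edgeSet = ∅ := by
    ext e
    refine Sym2.ind (fun x y => ?_) e
    simp only [mem_edgeSet, Set.mem_empty_iff_false, iff_false]
    intro h
    exact G.ne_of_adj h (Subsingleton.elim x y)
  simp [edgeCount, this]

lemma exMax_one {P : SimpleGraph (Fin 1) → Prop} (h : ∃ G, P G) : exMax 1 P = 0 := by
  obtain ⟨G, hG⟩ := h
  have h1 : {m | ∃ G : SimpleGraph (Fin 1), P G ∧ edgeCount G = m} = {0} := by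
    ext m
    constructor
    · rintro ⟨G', -, rfl⟩; simp [edgeCount_fin_one]
    · rintro rfl; exact ⟨G, hG, edgeCount_fin_one G⟩
  simp [exMax, h1]

lemma edgeSet_map' (f : V ↪ β) (G : SimpleGraph V) :
    (G.map f).edgeSet = Sym2.map f '' G.edgeSet := by
  ext e
  refine Sym2.ind (fun x y => ?_) e
  simp only [mem_edgeSet, map_adj, Set.mem_image]
  constructor
  · rintro ⟨a, b, hab, rfl, rfl⟩
    exact ⟨s(a, b), hab, rfl⟩
  · rintro ⟨e₀, he₀, hmap⟩
    revert he₀ hmap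
    refine Sym2.ind (fun a b => ?_) e₀
    intro hab hmap
    rw [Sym2.map_pair_eq, Sym2.eq_iff] at hmap
    rcases hmap with ⟨rfl, rfl⟩ | ⟨rfl, rfl⟩
    · exact ⟨a, b, hab, rfl, rfl⟩
    · exact ⟨b, a, hab.symm, rfl, rfl⟩

section Construction

variable {m p q : ℕ}

/-- Vertex type of the block construction: a hub (`none`), `p` blocks of `m`
vertices each, and one extra block of `q` vertices. -/
abbrev BW (m p q : ℕ) : Type := Option (Fin p × Fin m ⊕ Fin q)

def embB (m q : ℕ) {p : ℕ} (i : Fin p) (j : Fin (m + 1)) : BW m p q :=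
  (finSuccEquiv m j).map (fun j' => Sum.inl (i, j'))

def embH (m p q : ℕ) (j : Fin (q + 1)) : BW m p q :=
  (finSuccEquiv q j).map Sum.inr

lemma embB_inj (i : Fin p) : Function.Injective (embB m q (p := p) i) := by
  have h1 : Function.Injective fun j' : Fin m => (Sum.inl (i, j') : Fin p × Fin m ⊕ Fin q) :=
    fun a b h => by simpa using h
  exact (Option.map_injective h1).comp (finSuccEquiv m).injective

lemma embH_inj : Function.Injective (embH m p q) := by
  have h1 : Function.Injective fun j' : Fin q => (Sum.inr j' : Fin p × Fin m ⊕ Fin q) :=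
    fun a b h => by simpa using h
  exact (Option.map_injective h1).comp (finSuccEquiv q).injective

lemma mem_range_embB {x : BW m p q} {i : Fin p} :
    x ∈ Set.range (embB m q i) ↔ x = none ∨ ∃ j, x = some (Sum.inl (i, j)) := by
  constructor
  · rintro ⟨j, rfl⟩
    cases h : finSuccEquiv m j with
    | none => left; simp [embB, h]
    | some j' => right; exact ⟨j', by simp [embB, h]⟩
  · rintro (rfl | ⟨j, rfl⟩)
    · exact ⟨(finSuccEquiv m).symm none, by simp [embB]⟩
    · exact ⟨(finSuccEquiv m).symm (some j), by simp [embB]⟩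

lemma mem_range_embH {x : BW m p q} :
    x ∈ Set.range (embH m p q) ↔ x = none ∨ ∃ j, x = some (Sum.inr j) := by
  constructor
  · rintro ⟨j, rfl⟩
    cases h : finSuccEquiv q j with
    | none => left; simp [embH, h]
    | some j' => right; exact ⟨j', by simp [embH, h]⟩
  · rintro (rfl | ⟨j, rfl⟩)
    · exact ⟨(finSuccEquiv q).symm none, by simp [embH]⟩
    · exact ⟨(finSuccEquiv q).symm (some j), by simp [embH]⟩

lemma range_eq_none_BB {x : BW m p q} {i j : Fin p} (hij : i ≠ j)
    (hi : x ∈ Set.range (embB m q i)) (hj : x ∈ Set.range (embB m q j)) : x = none := by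
  rcases mem_range_embB.1 hi with rfl | ⟨a, rfl⟩
  · rfl
  · rcases mem_range_embB.1 hj with h | ⟨b, hb⟩
    · exact h
    · simp only [Option.some.injEq, Sum.inl.injEq, Prod.mk.injEq] at hb
      exact absurd hb.1 hij

lemma range_eq_none_BH {x : BW m p q} {i : Fin p}
    (hi : x ∈ Set.range (embB m q i)) (hj : x ∈ Set.range (embH m p q)) : x = none := by
  rcases mem_range_embB.1 hi with rfl | ⟨a, rfl⟩
  · rfl
  · rcases mem_range_embH.1 hj with h | ⟨b, hb⟩
    · exact h
    · simp at hb

/-- The block construction graph. -/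
def GW (p : ℕ) (G₀ : SimpleGraph (Fin (m + 1))) (H₀ : SimpleGraph (Fin (q + 1))) :
    SimpleGraph (BW m p q) :=
  (⨆ i : Fin p, G₀.map (⟨embB m q i, embB_inj i⟩ : Fin (m + 1) ↪ BW m p q)) ⊔
    H₀.map (⟨embH m p q, embH_inj⟩ : Fin (q + 1) ↪ BW m p q)

variable {G₀ : SimpleGraph (Fin (m + 1))} {H₀ : SimpleGraph (Fin (q + 1))}

lemma gw_adj_cases {x y : BW m p q} (h : (GW p G₀ H₀).Adj x y) :
    (∃ i, ∃ a b, G₀.Adj a b ∧ embB m q i a = x ∧ embB m q i b = y) ∨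
      (∃ a b, H₀.Adj a b ∧ embH m p q a = x ∧ embH m p q b = y) := by
  rcases (sup_adj _ _ _ _).1 h with h | h
  · left
    obtain ⟨i, hi⟩ := iSup_adj.1 h
    obtain ⟨a, b, hab, ha, hb⟩ := (map_adj _ _ _ _).1 hi
    exact ⟨i, a, b, hab, ha, hb⟩
  · right
    obtain ⟨a, b, hab, ha, hb⟩ := (map_adj _ _ _ _).1 h
    exact ⟨a, b, hab, ha, hb⟩

def tag : BW m p q → Option (Fin p ⊕ Unit)
  | none => none
  | some (Sum.inl (i, _)) => some (Sum.inl i)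
  | some (Sum.inr _) => some (Sum.inr ())

lemma tag_ne_none {x : BW m p q} (hx : x ≠ none) : tag x ≠ none := by
  match x with
  | none => exact absurd rfl hx
  | some (Sum.inl (i, j)) => simp [tag]
  | some (Sum.inr j) => simp [tag]

lemma eq_of_tag_inl {x : BW m p q} {i : Fin p} (hx : x ≠ none)
    (ht : tag x = some (Sum.inl i)) : ∃ j, x = some (Sum.inl (i, j)) := by
  match x with
  | none => exact absurd rfl hx
  | some (Sum.inl (i', j)) =>
    simp only [tag, Option.some.injEq, Sum.inl.injEq] at ht
    exact ⟨j, by rw [ht]⟩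
  | some (Sum.inr j) => simp [tag] at ht

lemma eq_of_tag_inr {x : BW m p q} (hx : x ≠ none)
    (ht : tag x = some (Sum.inr ())) : ∃ j, x = some (Sum.inr j) := by
  match x with
  | none => exact absurd rfl hx
  | some (Sum.inl (i', j)) => simp [tag] at ht
  | some (Sum.inr j) => exact ⟨j, rfl⟩

lemma tag_of_mem_range_embB {x : BW m p q} {i : Fin p} (hx : x ≠ none)
    (h : x ∈ Set.range (embB m q i)) : tag x = some (Sum.inl i) := by
  rcases mem_range_embB.1 h with rfl | ⟨j, rfl⟩
  · exact absurd rfl hx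
  · rfl

lemma tag_of_mem_range_embH {x : BW m p q} (hx : x ≠ none)
    (h : x ∈ Set.range (embH m p q)) : tag x = some (Sum.inr ()) := by
  rcases mem_range_embH.1 h with rfl | ⟨j, rfl⟩
  · exact absurd rfl hx
  · rfl

lemma adj_tag {x y : BW m p q} (h : (GW p G₀ H₀).Adj x y)
    (hx : x ≠ none) (hy : y ≠ none) : tag x = tag y := by
  rcases gw_adj_cases h with ⟨i, a, b, -, ha, hb⟩ | ⟨a, b, -, ha, hb⟩
  · rw [tag_of_mem_range_embB hx ⟨a, ha⟩, tag_of_mem_range_embB hy ⟨b, hb⟩]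
  · rw [tag_of_mem_range_embH hx ⟨a, ha⟩, tag_of_mem_range_embH hy ⟨b, hb⟩]

lemma tag_chain {a : BW m p q} {l : List (BW m p q)}
    (hc : List.Chain (GW p G₀ H₀).Adj a l) (hn : ∀ x ∈ a :: l, x ≠ none) :
    ∀ x ∈ a :: l, tag x = tag a := by
  induction l generalizing a with
  | nil => intro x hx; simp at hx; subst hx; rfl
  | cons b l' ih =>
    rcases List.chain_cons.1 hc with ⟨hab, hbl⟩
    have hb := ih hbl (fun x hx => hn x (List.mem_cons_of_mem _ hx))
    intro x hx
    rcases List.mem_cons.1 hx with rfl | hx'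
    · rfl
    · rw [hb x hx',
        ← adj_tag hab (hn a List.mem_cons_self) (hn b (by simp))]


lemma tag_chain' {l : List (BW m p q)} (hc : List.Chain' (GW p G₀ H₀).Adj l)
    (hn : ∀ x ∈ l, x ≠ none) : ∀ x ∈ l, ∀ y ∈ l, tag x = tag y := by
  cases l with
  | nil => intro x hx; simp at hx
  | cons a l' =>
    intro x hx y hy
    rw [tag_chain hc hn x hx, tag_chain hc hn y hy]

lemma adj_block {i : Fin p} {x y : BW m p q} (hx : x ∈ Set.range (embB m q i))
    (hy : y ∈ Set.range (embB m q i)) (h : (GW p G₀ H₀).Adj x y) :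
    ∃ a b, G₀.Adj a b ∧ embB m q i a = x ∧ embB m q i b = y := by
  have hne : x ≠ y := h.ne
  rcases gw_adj_cases h with ⟨j, a, b, hab, ha, hb⟩ | ⟨a, b, hab, ha, hb⟩
  · by_cases hij : i = j
    · subst hij; exact ⟨a, b, hab, ha, hb⟩
    · have h1 : x = none := range_eq_none_BB hij hx ⟨a, ha⟩
      have h2 : y = none := range_eq_none_BB hij hy ⟨b, hb⟩
      exact absurd (h1.trans h2.symm) hne
  · have h1 : x = none := range_eq_none_BH hx ⟨a, ha⟩
    have h2 : y = none := range_eq_none_BH hy ⟨b, hb⟩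
    exact absurd (h1.trans h2.symm) hne

lemma adj_hblock {x y : BW m p q} (hx : x ∈ Set.range (embH m p q))
    (hy : y ∈ Set.range (embH m p q)) (h : (GW p G₀ H₀).Adj x y) :
    ∃ a b, H₀.Adj a b ∧ embH m p q a = x ∧ embH m p q b = y := by
  have hne : x ≠ y := h.ne
  rcases gw_adj_cases h with ⟨j, a, b, hab, ha, hb⟩ | ⟨a, b, hab, ha, hb⟩
  · have h1 : x = none := range_eq_none_BH ⟨a, ha⟩ hx
    have h2 : y = none := range_eq_none_BH ⟨b, hb⟩ hy
    exact absurd (h1.trans h2.symm) hne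
  · exact ⟨a, b, hab, ha, hb⟩

/-- Pull a copy of `F` back through an injection whose range captures the copy. -/
lemma copy_pullback {F : SimpleGraph α} {GG : SimpleGraph β} {G : SimpleGraph γ} [Nonempty γ]
    {g : γ → β} (hg : Function.Injective g)
    (hb : ∀ x y, x ∈ Set.range g → y ∈ Set.range g → GG.Adj x y →
      ∃ a b, G.Adj a b ∧ g a = x ∧ g b = y)
    {f : α → β} (hinj : Function.Injective f)
    (hadj : ∀ ⦃a b⦄, F.Adj a b → GG.Adj (f a) (f b))
    (hr : ∀ a, f a ∈ Set.range g) : ContainsCopy F G := by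
  refine ⟨fun a => Function.invFun g (f a), ?_, ?_⟩
  · intro a b hab
    have hab' : Function.invFun g (f a) = Function.invFun g (f b) := hab
    have h1 : g (Function.invFun g (f a)) = f a := Function.invFun_eq (hr a)
    have h2 : g (Function.invFun g (f b)) = f b := Function.invFun_eq (hr b)
    apply hinj
    rw [← h1, ← h2, hab']
  · intro a b hab
    obtain ⟨a', b', hab', ha', hb'⟩ := hb (f a) (f b) (hr a) (hr b) (hadj hab)
    have h1 : g (Function.invFun g (f a)) = f a := Function.invFun_eq (hr a)
    have h2 : g (Function.invFun g (f b)) = f b := Function.invFun_eq (hr b)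
    have e1 : a' = Function.invFun g (f a) := hg (by rw [ha', h1])
    have e2 : b' = Function.invFun g (f b) := hg (by rw [hb', h2])
    show G.Adj (Function.invFun g (f a)) (Function.invFun g (f b))
    rwa [← e1, ← e2]

lemma gw_free {F : SimpleGraph α} [Fintype α] (hF2 : TwoConnected F)
    (h₀ : ¬ ContainsCopy F G₀) (h₁ : ¬ ContainsCopy F H₀) :
    ¬ ContainsCopy F (GW p G₀ H₀) := by
  rintro ⟨f, hinj, hadj⟩
  obtain ⟨x₀, y₀, hxy₀⟩ := Fintype.exists_pair_of_one_lt_card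
    (lt_of_lt_of_le (by norm_num) hF2.1)
  have hex : ∃ a, f a ≠ none := by
    by_contra hno
    push_neg at hno
    exact hxy₀ (hinj ((hno x₀).trans (hno y₀).symm))
  obtain ⟨a₀, ha₀⟩ := hex
  have hconst : ∀ a, f a ≠ none → tag (f a) = tag (f a₀) := by
    intro a ha
    by_cases hhub : ∃ v₀, f v₀ = none
    · obtain ⟨v₀, hv₀⟩ := hhub
      have hane : a ≠ v₀ := fun h => ha (h ▸ hv₀)
      have ha₀ne : a₀ ≠ v₀ := fun h => ha₀ (h ▸ hv₀)
      have hcon := hF2.2.2 v₀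
      have hreach := hcon.preconnected ⟨a₀, by simp [ha₀ne]⟩ ⟨a, by simp [hane]⟩
      refine hreach.elim fun wF => ?_
      let hom : F.induce ({v₀}ᶜ : Set α) →g GW p G₀ H₀ :=
        ⟨fun x => f x.1, fun {x y} h => hadj h⟩
      have hsupp : ∀ x ∈ (wF.map hom).support, x ≠ none := by
        intro x hx
        rw [SimpleGraph.Walk.support_map] at hx
        obtain ⟨z, hz, rfl⟩ := List.mem_map.1 hx
        intro hzn
        have hzv : z.1 = v₀ := hinj (hzn.trans hv₀.symm)
        have hz2 : z.1 ∈ ({v₀}ᶜ : Set α) := z.2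
        rw [hzv] at hz2
        simp at hz2
      exact tag_chain' (SimpleGraph.Walk.isChain_adj_support (wF.map hom)) hsupp (f a)
        (SimpleGraph.Walk.end_mem_support (wF.map hom)) (f a₀)
        (SimpleGraph.Walk.start_mem_support (wF.map hom))
    · push_neg at hhub
      have hreach := hF2.2.1.preconnected a₀ a
      refine hreach.elim fun wF => ?_
      let hom : F →g GW p G₀ H₀ := ⟨f, fun {x y} h => hadj h⟩
      have hsupp : ∀ x ∈ (wF.map hom).support, x ≠ none := by
        intro x hx
        rw [SimpleGraph.Walk.support_map] at hx
        obtain ⟨z, hz, rfl⟩ := List.mem_map.1 hx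
        exact hhub z
      exact tag_chain' (SimpleGraph.Walk.isChain_adj_support (wF.map hom)) hsupp (f a)
        (SimpleGraph.Walk.end_mem_support (wF.map hom)) (f a₀)
        (SimpleGraph.Walk.start_mem_support (wF.map hom))
  cases htag : tag (f a₀) with
  | none => exact tag_ne_none ha₀ htag
  | some s =>
    cases s with
    | inl i =>
      refine h₀ (copy_pullback (embB_inj i) (fun x y hx hy h => adj_block hx hy h)
        hinj hadj ?_)
      intro a
      by_cases ha : f a = none
      · exact mem_range_embB.2 (Or.inl ha)
      · obtain ⟨j, hj⟩ := eq_of_tag_inl ha ((hconst a ha).trans htag)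
        exact mem_range_embB.2 (Or.inr ⟨j, hj⟩)
    | inr u =>
      refine h₁ (copy_pullback embH_inj (fun x y hx hy h => adj_hblock hx hy h)
        hinj hadj ?_)
      intro a
      by_cases ha : f a = none
      · exact mem_range_embH.2 (Or.inl ha)
      · obtain ⟨j, hj⟩ := eq_of_tag_inr ha ((hconst a ha).trans (by cases u; exact htag))
        exact mem_range_embH.2 (Or.inr ⟨j, hj⟩)


lemma capture_of_tag {t : Fin p ⊕ Unit} {S : List (BW m p q)}
    (h : ∀ x ∈ S, x = none ∨ tag x = some t) :
    (∃ i, ∀ x ∈ S, x ∈ Set.range (embB m q (p := p) i)) ∨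
      (∀ x ∈ S, x ∈ Set.range (embH m p q)) := by
  cases t with
  | inl i =>
    left
    refine ⟨i, fun x hx => ?_⟩
    rcases h x hx with rfl | ht
    · exact mem_range_embB.2 (Or.inl rfl)
    · by_cases hxn : x = none
      · exact mem_range_embB.2 (Or.inl hxn)
      · exact mem_range_embB.2 (Or.inr (eq_of_tag_inl hxn ht))
  | inr u =>
    right
    intro x hx
    rcases h x hx with rfl | ht
    · exact mem_range_embH.2 (Or.inl rfl)
    · by_cases hxn : x = none
      · exact mem_range_embH.2 (Or.inl hxn)
      · exact mem_range_embH.2 (Or.inr (eq_of_tag_inr hxn (by cases u; exact ht)))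

lemma gw_cycle_capture {v : BW m p q} {w : (GW p G₀ H₀).Walk v v} (hw : w.IsCycle) :
    (∃ i, ∀ x ∈ w.support, x ∈ Set.range (embB m q (p := p) i)) ∨
      (∀ x ∈ w.support, x ∈ Set.range (embH m p q)) := by
  classical
  have hlen := hw.three_le_length
  have htne : w.support.tail ≠ [] := by
    intro h
    have h1 : w.support.tail.length = w.length := by
      rw [List.length_tail, SimpleGraph.Walk.length_support]
      omega
    rw [h] at h1
    simp at h1
    omega
  have aux2 : ∀ (l : List (BW m p q)) (hl : l ≠ []) (ht : l.tail ≠ []),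
      l.tail.getLast ht = l.getLast hl := by
    intro l hl ht
    cases l with
    | nil => exact absurd rfl hl
    | cons a t => exact (List.getLast_cons (by simpa using ht)).symm
  have hvmem : v ∈ w.support.tail := by
    have h2 : w.support.tail.getLast htne = v :=
      (aux2 w.support (SimpleGraph.Walk.support_ne_nil w) htne).trans
        (SimpleGraph.Walk.getLast_support w)
    have h3 := List.getLast_mem htne
    rwa [h2] at h3
  rcases Classical.em ((none : BW m p q) ∈ w.support) with hnone | hnone
  · set c := w.rotate _ hnone with hc
    have hrot : c.support.tail ~r w.support.tail := SimpleGraph.Walk.support_rotate w _ hnone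
    have hmemw : ∀ x ∈ w.support, x ∈ c.support.tail := by
      intro x hx
      have hx' : x ∈ w.support.tail := by
        rcases List.mem_cons.1 (by rw [SimpleGraph.Walk.support_eq_cons w] at hx; exact hx)
          with rfl | h
        · exact hvmem
        · exact h
      exact hrot.mem_iff.2 hx'
    have htnodup : c.support.tail.Nodup := hrot.nodup_iff.2 hw.support_nodup
    have htne' : c.support.tail ≠ [] := by
      intro h
      have := hmemw v (SimpleGraph.Walk.start_mem_support w)
      rw [h] at this
      simp at this
    have hlast : c.support.tail.getLast htne' = none := by
      exact (aux2 c.support (SimpleGraph.Walk.support_ne_nil c) htne').trans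
        (SimpleGraph.Walk.getLast_support c)
    have hdecomp : c.support.tail.dropLast ++ [none] = c.support.tail := by
      conv_rhs => rw [← List.dropLast_append_getLast htne']
      rw [hlast]
    have hnotin : none ∉ c.support.tail.dropLast := by
      have h1 := htnodup
      rw [← hdecomp] at h1
      rcases List.nodup_append.1 h1 with ⟨-, -, hdisj⟩
      intro h
      exact hdisj _ h _ (by simp) rfl
    have hchain : List.Chain' (GW p G₀ H₀).Adj c.support.tail.dropLast := by
      have h1 := SimpleGraph.Walk.isChain_adj_support c
      rw [SimpleGraph.Walk.support_eq_cons c] at h1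
      have h2 := h1.tail
      simp only [List.tail_cons] at h2
      rw [← hdecomp] at h2
      exact (List.isChain_append.1 h2).1
    have hconst := tag_chain' (G₀ := G₀) (H₀ := H₀) hchain
      (fun x hx hxn => hnotin (hxn ▸ hx))
    cases hdl : c.support.tail.dropLast with
    | nil =>
      right
      intro x hx
      have hx' := hmemw x hx
      rw [← hdecomp, hdl] at hx'
      simp at hx'
      exact mem_range_embH.2 (Or.inl hx')
    | cons a l' =>
      have hamem : a ∈ c.support.tail.dropLast := by
        rw [hdl]; exact List.mem_cons_self
      have hane : a ≠ none := fun h => hnotin (h ▸ hamem)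
      cases hta : tag a with
      | none => exact absurd hta (tag_ne_none hane)
      | some tv =>
        refine capture_of_tag (t := tv) (S := w.support) ?_
        intro x hx
        by_cases hxn : x = none
        · exact Or.inl hxn
        · right
          have hx' := hmemw x hx
          rw [← hdecomp] at hx'
          rcases List.mem_append.1 hx' with h | h
          · rw [hconst x h a hamem, hta]
          · simp at h
            exact absurd h hxn
  · have hne : v ≠ none := fun h => hnone (h ▸ SimpleGraph.Walk.start_mem_support w)
    have hsupp : ∀ x ∈ w.support, x ≠ none := fun x hx h => hnone (h ▸ hx)
    have hconst := tag_chain' (SimpleGraph.Walk.isChain_adj_support w) hsupp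
    cases htv : tag v with
    | none => exact absurd htv (tag_ne_none hne)
    | some tv =>
      refine capture_of_tag (t := tv) (S := w.support) ?_
      intro x hx
      right
      rw [hconst x hx v (SimpleGraph.Walk.start_mem_support w), htv]


lemma length_le_of_support_subset {r : ℕ} {v : BW m p q} {w : (GW p G₀ H₀).Walk v v}
    (hw : w.IsCycle) {g : Fin r → BW m p q} (_hg : Function.Injective g)
    (hsub : ∀ x ∈ w.support, x ∈ Set.range g) : w.length ≤ r := by
  classical
  have h1 : w.support.tail.length = w.length := by
    rw [List.length_tail, SimpleGraph.Walk.length_support]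
    omega
  have h2 : w.support.tail.Nodup := hw.support_nodup
  have h3 : w.support.tail.toFinset.card = w.support.tail.length :=
    List.toFinset_card_of_nodup h2
  have h4 : w.support.tail.toFinset ⊆ Finset.univ.image g := by
    intro x hx
    obtain ⟨a, ha⟩ := hsub x (List.mem_of_mem_tail (List.mem_toFinset.1 hx))
    exact Finset.mem_image.2 ⟨a, Finset.mem_univ a, ha⟩
  calc w.length = w.support.tail.toFinset.card := by rw [h3, h1]
    _ ≤ (Finset.univ.image g).card := Finset.card_le_card h4
    _ ≤ (Finset.univ : Finset (Fin r)).card := Finset.card_image_le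
    _ = r := by simp

lemma gw_no_cycle (hq : q ≤ m) : ¬ HasCycleGE (GW p G₀ H₀) (m + 2) := by
  rintro ⟨v, w, hc, hl⟩
  rcases gw_cycle_capture hc with ⟨i, hcap⟩ | hcap
  · have := length_le_of_support_subset hc (embB_inj i) hcap
    omega
  · have := length_le_of_support_subset hc embH_inj hcap
    omega

lemma edgeSet_iSup' {ι : Type*} (f : ι → SimpleGraph V) :
    (⨆ i, f i).edgeSet = ⋃ i, (f i).edgeSet := by
  ext e
  refine Sym2.ind (fun x y => ?_) e
  simp only [mem_edgeSet, iSup_adj, Set.mem_iUnion]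

lemma ncard_iUnion_fin {β : Type*} {r : ℕ} (S : Fin r → Set β) (hfin : ∀ i, (S i).Finite)
    (hdisj : ∀ i j, i ≠ j → Disjoint (S i) (S j)) :
    (⋃ i, S i).ncard = ∑ i, (S i).ncard := by
  classical
  have he : (⋃ i, S i) = ↑(Finset.univ.biUnion fun i => (hfin i).toFinset) := by
    ext x
    simp [Set.Finite.mem_toFinset]
  rw [he, Set.ncard_coe_finset, Finset.card_biUnion]
  · exact Finset.sum_congr rfl fun i _ => (Set.ncard_eq_toFinset_card _ (hfin i)).symm
  · intro i _ j _ hij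
    exact Finset.disjoint_left.2 fun a hai haj =>
      (Set.disjoint_left.1 (hdisj i j hij)) ((hfin i).mem_toFinset.1 hai)
        ((hfin j).mem_toFinset.1 haj)

lemma edge_mem_image {W' γ' : Type*} {g : γ' → W'} (hg : Function.Injective g)
    {G : SimpleGraph γ'} {e : Sym2 W'} (he : e ∈ Sym2.map g '' G.edgeSet) :
    ∃ x y, x ≠ y ∧ e = s(x, y) ∧ x ∈ Set.range g ∧ y ∈ Set.range g := by
  obtain ⟨e₀, he₀, rfl⟩ := he
  revert he₀
  refine Sym2.ind (fun a b => ?_) e₀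
  intro hab
  exact ⟨g a, g b, fun h => G.ne_of_adj hab (hg h), Sym2.map_pair_eq g a b,
    ⟨a, rfl⟩, ⟨b, rfl⟩⟩

lemma gw_edgeCount : edgeCount (GW p G₀ H₀) = p * edgeCount G₀ + edgeCount H₀ := by
  classical
  set SB : Fin p → Set (Sym2 (BW m p q)) :=
    fun i => Sym2.map (embB m q i) '' G₀.edgeSet with hSB
  set SH : Set (Sym2 (BW m p q)) := Sym2.map (embH m p q) '' H₀.edgeSet with hSH
  have hedge : (GW p G₀ H₀).edgeSet = (⋃ i, SB i) ∪ SH := by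
    rw [GW, edgeSet_sup, edgeSet_iSup']
    congr 1
    · exact Set.iUnion_congr fun i => edgeSet_map' _ _
    · exact edgeSet_map' _ _
  have hdisjBB : ∀ i j, i ≠ j → Disjoint (SB i) (SB j) := by
    intro i j hij
    rw [Set.disjoint_left]
    rintro e hei hej
    obtain ⟨x, y, hxy, rfl, hxi, hyi⟩ := edge_mem_image (embB_inj i) hei
    obtain ⟨x', y', hxy', heq, hxj, hyj⟩ := edge_mem_image (embB_inj j) hej
    rw [Sym2.eq_iff] at heq
    have hxy2 : x ∈ Set.range (embB m q j) ∧ y ∈ Set.range (embB m q j) := by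
      rcases heq with ⟨rfl, rfl⟩ | ⟨rfl, rfl⟩
      · exact ⟨hxj, hyj⟩
      · exact ⟨hyj, hxj⟩
    exact hxy ((range_eq_none_BB hij hxi hxy2.1).trans
      (range_eq_none_BB hij hyi hxy2.2).symm)
  have hdisjH : Disjoint (⋃ i, SB i) SH := by
    rw [Set.disjoint_left]
    rintro e hei hej
    obtain ⟨i, hei⟩ := Set.mem_iUnion.1 hei
    obtain ⟨x, y, hxy, rfl, hxi, hyi⟩ := edge_mem_image (embB_inj i) hei
    obtain ⟨x', y', hxy', heq, hxj, hyj⟩ := edge_mem_image (embH_inj (m := m) (p := p)) hej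
    rw [Sym2.eq_iff] at heq
    have hxy2 : x ∈ Set.range (embH m p q) ∧ y ∈ Set.range (embH m p q) := by
      rcases heq with ⟨rfl, rfl⟩ | ⟨rfl, rfl⟩
      · exact ⟨hxj, hyj⟩
      · exact ⟨hyj, hxj⟩
    exact hxy ((range_eq_none_BH hxi hxy2.1).trans (range_eq_none_BH hyi hxy2.2).symm)
  have hcardB : ∀ i, (SB i).ncard = edgeCount G₀ := fun i =>
    Set.ncard_image_of_injective _ (Sym2.map.injective (embB_inj i))
  have hcardH : SH.ncard = edgeCount H₀ :=
    Set.ncard_image_of_injective _ (Sym2.map.injective embH_inj)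
  rw [edgeCount, hedge, Set.ncard_union_eq hdisjH (Set.toFinite _) (Set.toFinite _),
    ncard_iUnion_fin SB (fun i => Set.toFinite _) hdisjBB, hcardH]
  congr 1
  rw [Finset.sum_congr rfl fun i _ => hcardB i, Finset.sum_const, Finset.card_univ]
  simp [mul_comm]

lemma card_BW : Fintype.card (BW m p q) = p * m + q + 1 := by
  simp [BW]

end Construction
lemma edgeCount_map (f : V ↪ β) (G : SimpleGraph V) :
    edgeCount (G.map f) = edgeCount G := by
  rw [edgeCount, edgeSet_map', Set.ncard_image_of_injective _ (Sym2.map.injective f.injective),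
    edgeCount]

-- transport along an equiv
lemma containsCopy_map_equiv (e : γ ≃ δ) (G : SimpleGraph γ) (F : SimpleGraph α) :
    ContainsCopy F (G.map e.toEmbedding) ↔ ContainsCopy F G := by
  constructor
  · rintro ⟨f, hinj, hadj⟩
    refine ⟨fun a => e.symm (f a), fun a b hab => hinj (by simpa using hab), fun a b hab => ?_⟩
    obtain ⟨a', b', h', ha', hb'⟩ := (map_adj _ _ _ _).1 (hadj hab)
    have : a' = e.symm (f a) := by rw [← ha']; simp
    have hb : b' = e.symm (f b) := by rw [← hb']; simp
    show G.Adj (e.symm (f a)) (e.symm (f b))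
    rwa [← this, ← hb]
  · rintro ⟨f, hinj, hadj⟩
    exact ⟨fun a => e (f a), fun a b hab => hinj (e.injective hab),
      fun a b hab => (map_adj _ _ _ _).2 ⟨f a, f b, hadj hab, rfl, rfl⟩⟩

lemma hasCycleGE_map_equiv (e : γ ≃ δ) (G : SimpleGraph γ) (k : ℕ) :
    HasCycleGE (G.map e.toEmbedding) k ↔ HasCycleGE G k := by
  have hiso : G ≃g G.map e.toEmbedding :=
    ⟨e, fun {a b} => by exact map_adj_apply (f := e.toEmbedding)⟩
  constructor
  · rintro ⟨v, w, hc, hl⟩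
    refine ⟨hiso.symm v, (w.map hiso.symm.toHom).copy ?_ ?_, hc.map hiso.symm.injective, ?_⟩
    · rfl
    · rfl
    · simpa using hl
  · rintro ⟨v, w, hc, hl⟩
    exact ⟨hiso v, w.map hiso.toHom, hc.map hiso.injective, by simpa using hl⟩

-- every graph transported along an equiv
lemma transport_equiv (e : γ ≃ δ) (G : SimpleGraph γ) (F : SimpleGraph α) (k : ℕ) :
    ∃ G' : SimpleGraph δ, edgeCount G' = edgeCount G ∧
      (ContainsCopy F G' ↔ ContainsCopy F G) ∧ (HasCycleGE G' k ↔ HasCycleGE G k) :=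
  ⟨G.map e.toEmbedding, edgeCount_map _ _, containsCopy_map_equiv e G F,
    hasCycleGE_map_equiv e G k⟩


end Helpers

/-- Lower bound from the block construction: for `k ≥ 3`, a 2-connected `F`,
and `n − 1 = p(k−2) + q` with `0 ≤ q ≤ k−3`,
`ex(n, {𝓒_{≥k}, F}) ≥ p·ex(k-1,F) + ex(q+1,F)`; consequently
`ex(n, {𝓒_{≥k}, F}) ≥ (ex(k-1,F)/(k-2))·n + O_k(1)`. -/
theorem stmt15 {α : Type*} [Fintype α] (k : ℕ) (hk : 3 ≤ k)
    (F : SimpleGraph α) (hF2 : TwoConnected F) :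
    (∀ n p q : ℕ, n - 1 = p * (k - 2) + q → q ≤ k - 3 →
      p * exMax (k - 1) (fun G => ¬ ContainsCopy F G)
          + exMax (q + 1) (fun G => ¬ ContainsCopy F G)
        ≤ exMax n (fun G => ¬ HasCycleGE G k ∧ ¬ ContainsCopy F G))
    ∧ ∃ C : ℝ, ∀ n : ℕ,
        (exMax (k - 1) (fun G => ¬ ContainsCopy F G) : ℝ) / ((k : ℝ) - 2) * (n : ℝ) - C
          ≤ (exMax n (fun G => ¬ HasCycleGE G k ∧ ¬ ContainsCopy F G) : ℝ) := by
  classical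
  have hedgeF : ∃ a b : α, F.Adj a b := by
    obtain ⟨x, y, hxy⟩ := Fintype.exists_pair_of_one_lt_card
      (lt_of_lt_of_le (by norm_num) hF2.1)
    obtain ⟨w⟩ := hF2.2.1.preconnected x y
    cases w with
    | nil => exact absurd rfl hxy
    | cons h _ => exact ⟨_, _, h⟩
  have hbot : ∀ n : ℕ, ¬ ContainsCopy F (⊥ : SimpleGraph (Fin n)) := by
    rintro n ⟨f, hinj, hadj⟩
    obtain ⟨a, b, hab⟩ := hedgeF
    exact hadj hab
  have main : ∀ n p q : ℕ, n - 1 = p * (k - 2) + q → q ≤ k - 3 →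
      p * exMax (k - 1) (fun G => ¬ ContainsCopy F G)
          + exMax (q + 1) (fun G => ¬ ContainsCopy F G)
        ≤ exMax n (fun G => ¬ HasCycleGE G k ∧ ¬ ContainsCopy F G) := by
    intro n p q hn hq
    rcases Nat.eq_zero_or_pos n with rfl | hn1
    · have h0 : p * (k - 2) + q = 0 := by simpa using hn.symm
      have hq0 : q = 0 := by omega
      have hp' : p * (k - 2) = 0 := by omega
      have hp0 : p = 0 := by
        rcases Nat.mul_eq_zero.1 hp' with h | h
        · exact h
        · omega
      subst hp0; subst hq0
      simp only [zero_mul, zero_add]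
      rw [exMax_one ⟨⊥, hbot 1⟩]
      exact Nat.zero_le _
    · set m := k - 2 with hm
      have hm1 : k - 1 = m + 1 := by omega
      have hm2 : m + 2 = k := by omega
      have hqm : q ≤ m := by omega
      obtain ⟨G₀', hG₀'free, hG₀'count⟩ :=
        exMax_exists (n := k - 1) (P := fun G => ¬ ContainsCopy F G) ⟨⊥, hbot _⟩
      obtain ⟨G₀, hG₀count, hG₀copy, -⟩ := transport_equiv (finCongr hm1) G₀' F k
      obtain ⟨H₀, hH₀free, hH₀count⟩ :=
        exMax_exists (n := q + 1) (P := fun G => ¬ ContainsCopy F G) ⟨⊥, hbot _⟩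
      have hcard : Fintype.card (BW m p q) = n := by rw [card_BW]; omega
      obtain ⟨G', hG'count, hG'copy, hG'cyc⟩ :=
        transport_equiv (Fintype.equivFinOfCardEq hcard) (GW p G₀ H₀) F k
      have hfree : ¬ ContainsCopy F G' := by
        rw [hG'copy]
        exact gw_free hF2 (by rw [hG₀copy]; exact hG₀'free) hH₀free
      have hnocyc : ¬ HasCycleGE G' k := by
        rw [hG'cyc, ← hm2]
        exact gw_no_cycle hqm
      have hcount : edgeCount G' = p * exMax (k - 1) (fun G => ¬ ContainsCopy F G)
          + exMax (q + 1) (fun G => ¬ ContainsCopy F G) := by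
        rw [hG'count, gw_edgeCount, hG₀count, hG₀'count, hH₀count]
      rw [← hcount]
      exact le_exMax G' ⟨hnocyc, hfree⟩
  refine ⟨main, ⟨(exMax (k - 1) (fun G => ¬ ContainsCopy F G) : ℝ), fun n => ?_⟩⟩
  set M : ℕ := exMax (k - 1) fun G => ¬ ContainsCopy F G with hM
  rcases Nat.eq_zero_or_pos n with rfl | hn1
  · have he : (M : ℝ) / ((k : ℝ) - 2) * ((0 : ℕ) : ℝ) - M = -M := by
      push_cast; ring
    rw [he]
    exact le_trans (neg_nonpos.2 (Nat.cast_nonneg M)) (Nat.cast_nonneg _)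
  · set p := (n - 1) / (k - 2) with hp
    set q := (n - 1) % (k - 2) with hq
    have hk2 : 0 < k - 2 := by omega
    have hdiv : n - 1 = p * (k - 2) + q := by
      rw [hp, hq, mul_comm]
      exact (Nat.div_add_mod _ _).symm
    have hqlt : q < k - 2 := Nat.mod_lt _ hk2
    have hq3 : q ≤ k - 3 := by omega
    have h1 := main n p q hdiv hq3
    have h2 : p * M ≤ exMax n (fun G => ¬ HasCycleGE G k ∧ ¬ ContainsCopy F G) :=
      le_trans (Nat.le_add_right _ _) h1
    have hkpos : (0 : ℝ) < (k : ℝ) - 2 := by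
      have h3 : (3 : ℝ) ≤ (k : ℝ) := by exact_mod_cast hk
      linarith
    have hcast : ((n : ℝ) - 1) = (p : ℝ) * ((k : ℝ) - 2) + (q : ℝ) := by
      have h4 : ((n - 1 : ℕ) : ℝ) = (n : ℝ) - 1 := by
        rw [Nat.cast_sub hn1]; simp
      have h5 : (((k - 2 : ℕ)) : ℝ) = (k : ℝ) - 2 := by
        rw [Nat.cast_sub (by omega)]; simp
      rw [← h4, hdiv]
      push_cast [h5]
      ring
    have hqb : (q : ℝ) ≤ (k : ℝ) - 3 := by
      have h6 : ((k - 3 : ℕ) : ℝ) = (k : ℝ) - 3 := by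
        rw [Nat.cast_sub (by omega)]; simp
      rw [← h6]
      exact_mod_cast hq3
    have key : (M : ℝ) / ((k : ℝ) - 2) * (n : ℝ) - M ≤ (p : ℝ) * M := by
      rw [div_mul_eq_mul_div, sub_le_iff_le_add, div_le_iff₀ hkpos]
      have h7 : (n : ℝ) ≤ (p : ℝ) * ((k : ℝ) - 2) + ((k : ℝ) - 2) := by linarith
      nlinarith [(Nat.cast_nonneg M : (0:ℝ) ≤ (M:ℝ)), hkpos]
    have h8 : ((p * M : ℕ) : ℝ)
        ≤ (exMax n (fun G => ¬ HasCycleGE G k ∧ ¬ ContainsCopy F G) : ℝ) :=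
      Nat.cast_le.2 h2
    push_cast at h8
    linarith
end

section
/- Let k ≥ 5, t = ⌊(k-1)/2⌋, and let F be a graph with p(F) ≥ t+1. For every n ≥ t+2, the join G = T ∨ I_{n−t} of any graph T ∈ EX(t,𝓗) with an independent set on n−t vertices is a 2-connected n-vertex graph that contains no cycle of length ≥ k and no copy of F, and has exactly ex(t,𝓗) + t(n−t) edges. Hence the maximum number of edges in an n-vertex 2-connected graph that is both 𝓒_{≥k}-free and F-free is at least ex(t,𝓗) + t(n−t). -/
open SimpleGraph

section Aux

variable {a b : ℕ} {T : SimpleGraph (Fin a)}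

lemma ji_adj_lr (u : Fin a) (v : Fin b) : (joinIndep a b T).Adj (Sum.inl u) (Sum.inr v) := by
  simp [joinIndep]

lemma ji_adj_ll {u v : Fin a} : (joinIndep a b T).Adj (Sum.inl u) (Sum.inl v) ↔ T.Adj u v := by
  rw [joinIndep, fromRel_adj]
  constructor
  · rintro ⟨hne, h | h⟩ <;>
    · rcases h with h | ⟨u', v', h1, h2, h3⟩
      · simp at h
      · simp only [Sum.inl.injEq] at h1 h2; subst h1; subst h2
        first | exact h3 | exact h3.symm
  · intro h
    exact ⟨by simp [h.ne], Or.inl (Or.inr ⟨u, v, rfl, rfl, h⟩)⟩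

lemma ji_not_adj_rr {u v : Fin b} : ¬ (joinIndep a b T).Adj (Sum.inr u) (Sum.inr v) := by
  rw [joinIndep, fromRel_adj]
  rintro ⟨hne, h | h⟩ <;>
  · rcases h with h | ⟨u', v', h1, h2, h3⟩ <;> simp_all

lemma ji_adj_not_rr {x y : Fin a ⊕ Fin b} (h : (joinIndep a b T).Adj x y) :
    ¬((Sum.isRight x : Prop) ∧ Sum.isRight y) := by
  rintro ⟨hx, hy⟩
  obtain ⟨u, rfl⟩ := Sum.isRight_iff.mp hx
  obtain ⟨v, rfl⟩ := Sum.isRight_iff.mp hy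
  exact ji_not_adj_rr h

lemma countB {γ δ : Type*} : ∀ l : List (γ ⊕ δ),
    l.Chain' (fun x y => ¬(x.isRight ∧ y.isRight)) →
    l.countP Sum.isRight ≤ l.countP Sum.isLeft + 1
  | [], _ => by simp
  | [x], _ => by cases x <;> simp [List.countP_cons]
  | x :: y :: rest, h => by
    have h1 : (y :: rest).Chain' (fun x y => ¬((Sum.isRight x : Prop) ∧ Sum.isRight y)) := h.tail
    cases x with
    | inl u =>
      have := countB (y :: rest) h1
      simp only [List.countP_cons] at this ⊢
      cases y <;> simp_all <;> omega
    | inr v =>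
      cases y with
      | inr v' =>
        exact absurd (List.isChain_cons_cons.mp h).1 (by simp)
      | inl u' =>
        have := countB rest h1.tail
        simp only [List.countP_cons] at this ⊢
        simp_all

lemma countA {γ δ : Type*} (x : γ ⊕ δ) (rest : List (γ ⊕ δ))
    (h : (x :: rest).Chain' (fun x y => ¬((Sum.isRight x : Prop) ∧ Sum.isRight y)))
    (hx : x.isLeft) :
    (x :: rest).countP Sum.isRight ≤ (x :: rest).countP Sum.isLeft := by
  obtain ⟨u, rfl⟩ := Sum.isLeft_iff.mp hx
  have := countB rest h.tail
  simp only [List.countP_cons]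
  simp
  omega

lemma countLR {γ δ : Type*} (l : List (γ ⊕ δ)) :
    l.countP Sum.isLeft + l.countP Sum.isRight = l.length := by
  induction l with
  | nil => simp
  | cons x t ih => cases x <;> simp [List.countP_cons] <;> omega

lemma countLeft_le {l : List (Fin a ⊕ Fin b)} (h : l.Nodup) :
    l.countP Sum.isLeft ≤ a := by
  classical
  rw [List.countP_eq_length_filter]
  have hn : (l.filter Sum.isLeft).Nodup := h.filter _
  have hsub : (l.filter Sum.isLeft).toFinset ⊆ Finset.univ.image Sum.inl := by
    intro x hx
    simp only [List.mem_toFinset, List.mem_filter] at hx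
    obtain ⟨u, rfl⟩ := Sum.isLeft_iff.mp hx.2
    simp
  calc (l.filter Sum.isLeft).length = (l.filter Sum.isLeft).toFinset.card :=
        (List.toFinset_card_of_nodup hn).symm
    _ ≤ (Finset.univ.image (Sum.inl : Fin a → Fin a ⊕ Fin b)).card := Finset.card_le_card hsub
    _ ≤ Finset.univ.card * 1 := by
        rw [mul_one]; exact Finset.card_image_le
    _ = a := by simp

lemma ji_cycle_length_le {v : Fin a ⊕ Fin b} (w : (joinIndep a b T).Walk v v)
    (hw : w.IsCycle) : w.length ≤ 2 * a := by
  classical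
  have h3 := hw.three_le_length
  have hnil : ¬ w.Nil := by rw [Walk.not_nil_iff_lt_length]; omega
  obtain ⟨u, hadj, q, hq⟩ := Walk.not_nil_iff.mp hnil
  have hx : ∃ x ∈ w.support, (Sum.isLeft x : Prop) := by
    have hnr := ji_adj_not_rr hadj
    by_cases hv : (Sum.isLeft v : Prop)
    · exact ⟨v, w.start_mem_support, hv⟩
    · refine ⟨u, ?_, ?_⟩
      · rw [hq, Walk.support_cons]
        exact List.mem_cons_of_mem _ q.start_mem_support
      · rcases u with u | u
        · simp
        · rcases v with v | v
          · simp at hv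
          · exact absurd ⟨rfl, rfl⟩ hnr
  obtain ⟨x, hmem, hxl⟩ := hx
  set c := w.rotate x hmem with hc_def
  have hc : c.IsCycle := hw.rotate hmem
  have hlen : c.length = w.length := by
    have := (Walk.rotate_darts w x hmem).perm.length_eq
    simpa only [Walk.length_darts] using this
  have hsup : c.support = x :: c.support.tail := (Walk.support_eq_cons c)
  have htail_len : c.support.tail.length = c.length := by
    rw [List.length_tail, Walk.length_support]; omega
  have htail_ne : c.support.tail ≠ [] := by
    intro h; rw [h] at htail_len; simp at htail_len; omega
  have h1 : c.support.getLast? = some x := by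
    rw [List.getLast?_eq_getLast_of_ne_nil (by simp), Walk.getLast_support]
  obtain ⟨y, t, htail⟩ : ∃ y t, c.support.tail = y :: t := by
    cases h : c.support.tail with
    | nil => exact absurd h htail_ne
    | cons y t => exact ⟨_, _, rfl⟩
  rw [hsup, htail, List.getLast?_cons_cons] at h1
  have htail_eq : c.support.tail.dropLast ++ [x] = c.support.tail := by
    rw [htail]
    exact List.dropLast_append_getLast? x h1
  set l := c.support.dropLast with hl_def
  have hl_cons : l = x :: c.support.tail.dropLast := by
    rw [hl_def]
    conv_lhs => rw [hsup]
    exact List.dropLast_cons_of_ne_nil htail_ne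
  have hl_len : l.length = c.length := by
    rw [hl_def, List.length_dropLast, Walk.length_support]; omega
  have htail_nodup : c.support.tail.Nodup := hc.support_nodup
  have hl_nodup : l.Nodup := by
    rw [hl_cons, List.nodup_cons]
    rw [← htail_eq] at htail_nodup
    have h2 := List.nodup_append.mp htail_nodup
    exact ⟨fun hx' => h2.2.2 x hx' x (by simp) rfl, h2.1⟩
  have hchain : l.Chain' (fun x y => ¬((Sum.isRight x : Prop) ∧ Sum.isRight y)) := by
    have hc1 : c.support.Chain' (joinIndep a b T).Adj := Walk.isChain_adj_support c
    have hc2 := hc1.imp (fun x y h => ji_adj_not_rr h)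
    exact hc2.prefix (List.dropLast_prefix _)
  have hRL : l.countP Sum.isRight ≤ l.countP Sum.isLeft := by
    rw [hl_cons] at hchain ⊢
    exact countA x _ hchain hxl
  have hL : l.countP Sum.isLeft ≤ a := countLeft_le hl_nodup
  have hsum := countLR l
  omega

lemma edgeCount_eq_card {W : Type*} [Fintype W] (G : SimpleGraph W) [Fintype G.edgeSet] :
    edgeCount G = G.edgeFinset.card := by
  rw [edgeCount, ← Set.ncard_coe_finset, coe_edgeFinset]

lemma ji_edgeCount : edgeCount (joinIndep a b T) = edgeCount T + a * b := by
  classical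
  rw [edgeCount_eq_card, edgeCount_eq_card]
  have h1 := SimpleGraph.sum_degrees_eq_twice_card_edges (joinIndep a b T)
  have h2 := SimpleGraph.sum_degrees_eq_twice_card_edges T
  rw [Fintype.sum_sum_type] at h1
  have hdl : ∀ u : Fin a, (joinIndep a b T).degree (Sum.inl u) = T.degree u + b := by
    intro u
    have hN : (joinIndep a b T).neighborFinset (Sum.inl u)
        = ((T.neighborFinset u).map ⟨Sum.inl, Sum.inl_injective⟩)
          ∪ (Finset.univ.map ⟨Sum.inr, Sum.inr_injective⟩) := by
      ext x
      rcases x with x | x <;>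
        simp [mem_neighborFinset, ji_adj_ll, ji_adj_lr]
    rw [degree, hN, Finset.card_union_of_disjoint (by simp [Finset.disjoint_left]),
      Finset.card_map, Finset.card_map, Finset.card_univ, Fintype.card_fin, degree]
  have hdr : ∀ v : Fin b, (joinIndep a b T).degree (Sum.inr v) = a := by
    intro v
    have hN : (joinIndep a b T).neighborFinset (Sum.inr v)
        = (Finset.univ.map ⟨Sum.inl, Sum.inl_injective⟩) := by
      ext x
      rcases x with x | x <;>
        simp [mem_neighborFinset, ji_adj_lr, ji_not_adj_rr]
      · exact (ji_adj_lr x v).symm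
    rw [degree, hN, Finset.card_map, Finset.card_univ, Fintype.card_fin]
  simp only [hdl, hdr, Finset.sum_add_distrib, Finset.sum_const, Finset.card_univ,
    Fintype.card_fin, smul_eq_mul] at h1
  rw [h2] at h1
  have hcomm := Nat.mul_comm a b
  omega

lemma conn_full {W : Type*} (H : SimpleGraph W) (P : W → Prop)
    (h : ∀ x y, ¬P x → P y → H.Adj x y)
    (hx : ∃ x, ¬P x) (hy : ∃ y, P y) : H.Connected := by
  obtain ⟨x0, hx0⟩ := hx
  obtain ⟨y0, hy0⟩ := hy
  rw [connected_iff]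
  refine ⟨?_, ⟨x0⟩⟩
  have key : ∀ z, H.Reachable z x0 := by
    intro z
    by_cases hz : P z
    · exact (h x0 z hx0 hz).symm.reachable
    · by_cases hzz : z = x0
      · exact hzz ▸ Reachable.refl _
      · exact ((h z y0 hz hy0).reachable).trans ((h x0 y0 hx0 hy0).symm.reachable)
  intro u v
  exact (key u).trans (key v).symm

lemma conn_induce {W : Type*} (H : SimpleGraph W) (P : W → Prop)
    (h : ∀ x y, ¬P x → P y → H.Adj x y) (s : Set W)
    (hx : ∃ x ∈ s, ¬P x) (hy : ∃ y ∈ s, P y) : (H.induce s).Connected := by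
  obtain ⟨x0, hx0s, hx0⟩ := hx
  obtain ⟨y0, hy0s, hy0⟩ := hy
  rw [connected_iff]
  refine ⟨?_, ⟨⟨x0, hx0s⟩⟩⟩
  have key : ∀ z (hz : z ∈ s), (H.induce s).Reachable ⟨z, hz⟩ ⟨x0, hx0s⟩ := by
    intro z hz
    by_cases hPz : P z
    · have hadj : (H.induce s).Adj ⟨x0, hx0s⟩ ⟨z, hz⟩ := by
        simp only [comap_adj, Function.Embedding.coe_subtype]
        exact h x0 z hx0 hPz
      exact hadj.symm.reachable
    · by_cases hzz : z = x0
      · subst hzz; exact Reachable.refl _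
      · have h1 : (H.induce s).Adj ⟨z, hz⟩ ⟨y0, hy0s⟩ := by
          simp only [comap_adj, Function.Embedding.coe_subtype]
          exact h z y0 hPz hy0
        have h2 : (H.induce s).Adj ⟨y0, hy0s⟩ ⟨x0, hx0s⟩ := by
          simp only [comap_adj, Function.Embedding.coe_subtype]
          exact (h x0 y0 hx0 hy0).symm
        exact h1.reachable.trans h2.reachable
  intro u v
  exact (key u.1 u.2).trans (key v.1 v.2).symm

lemma edgeCount_congr {W W' : Type*} {G : SimpleGraph W} {H : SimpleGraph W'} (φ : G ≃g H) :
    edgeCount G = edgeCount H := by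
  rw [edgeCount, edgeCount, ← Nat.card_coe_set_eq, ← Nat.card_coe_set_eq]
  exact Nat.card_congr φ.mapEdgeSet

lemma containsCopy_mono {α W W' : Type*} {F : SimpleGraph α} {G : SimpleGraph W}
    {H : SimpleGraph W'} (f : G →g H) (hf : Function.Injective f) :
    ContainsCopy F G → ContainsCopy F H := by
  rintro ⟨g, hg, hadj⟩
  exact ⟨fun x => f (g x), hf.comp hg, fun x y h => f.map_adj (hadj h)⟩

lemma hasCycleGE_mono {W W' : Type*} {G : SimpleGraph W} {H : SimpleGraph W'}
    (f : G →g H) (hf : Function.Injective f) (k : ℕ) :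
    HasCycleGE G k → HasCycleGE H k := by
  rintro ⟨v, w, hc, hk⟩
  exact ⟨f v, w.map f, hc.map hf, by rwa [Walk.length_map]⟩

lemma ji_no_copy {α : Type*} (F : SimpleGraph α) (hT : CoverFree F T) :
    ¬ ContainsCopy F (joinIndep a b T) := by
  rintro ⟨f, hinj, hadj⟩
  set S : Set α := {x | (Sum.isLeft (f x) : Prop)} with hS_def
  have hcov : IsVertexCovering F S := by
    intro x y hx hy hFxy
    have hx' : (Sum.isRight (f x) : Prop) := by
      simp only [hS_def, Set.mem_setOf_eq, Bool.not_eq_true, Sum.isLeft_eq_false] at hx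
      exact hx
    have hy' : (Sum.isRight (f y) : Prop) := by
      simp only [hS_def, Set.mem_setOf_eq, Bool.not_eq_true, Sum.isLeft_eq_false] at hy
      exact hy
    exact ji_adj_not_rr (hadj hFxy) ⟨hx', hy'⟩
  refine hT S hcov ?_
  have hg : ∀ z : S, ∃ u, f z.1 = Sum.inl u := fun z => Sum.isLeft_iff.mp z.2
  choose g hgspec using hg
  refine ⟨g, ?_, ?_⟩
  · intro z1 z2 h
    apply Subtype.ext
    apply hinj
    rw [hgspec z1, hgspec z2, h]
  · intro z1 z2 h
    have hFz : F.Adj z1.1 z2.1 := h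
    have := hadj hFz
    rwa [hgspec z1, hgspec z2, ji_adj_ll] at this

lemma exMax_bddAbove {n : ℕ} (P : SimpleGraph (Fin n) → Prop) :
    BddAbove {m | ∃ G : SimpleGraph (Fin n), P G ∧ edgeCount G = m} := by
  refine ⟨Fintype.card (Sym2 (Fin n)), ?_⟩
  rintro m ⟨G, _, rfl⟩
  calc edgeCount G ≤ (Set.univ : Set (Sym2 (Fin n))).ncard :=
        Set.ncard_le_ncard (Set.subset_univ _) Set.finite_univ
    _ = Fintype.card (Sym2 (Fin n)) := by rw [Set.ncard_univ, Nat.card_eq_fintype_card]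

lemma coverFree_bot {α : Type*} [Fintype α] (F : SimpleGraph α) (t : ℕ)
    (hpF : PGE F (t + 1)) : CoverFree F (⊥ : SimpleGraph (Fin t)) := by
  rintro S hS ⟨f, hinj, hadj⟩
  classical
  set c : α → Bool := fun x => decide (x ∈ S) with hc_def
  have hproper : ∀ p q, F.Adj p q → c p ≠ c q := by
    intro p q hpq hc
    by_cases hp : p ∈ S
    · have hq : q ∈ S := by
        by_contra hq
        simp [hc_def, hp, hq] at hc
      exact hadj (show (F.induce S).Adj ⟨p, hp⟩ ⟨q, hq⟩ from hpq)
    · by_cases hq : q ∈ S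
      · simp [hc_def, hp, hq] at hc
      · exact hS p q hp hq hpq
  obtain ⟨h1, _⟩ := hpF c hproper
  have hset : {x | c x = true} = S := by ext x; simp [hc_def]
  rw [hset] at h1
  have hcard : S.ncard ≤ t := by
    rw [← Nat.card_coe_set_eq, Nat.card_eq_fintype_card]
    exact (Fintype.card_le_of_injective f hinj).trans (by simp)
  omega

end Aux

/-- The extremal construction: for `k ≥ 5`, `t = ⌊(k-1)/2⌋`, `F` with
`p(F) ≥ t+1` and `n ≥ t+2`, the join `T ∨ I_{n−t}` of any `T ∈ EX(t, 𝓗)` with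
an independent set on `n−t` vertices is a 2-connected `n`-vertex graph with no
cycle of length `≥ k` and no copy of `F`, having `ex(t,𝓗) + t(n−t)` edges;
hence `ex_{2-conn}(n, {𝓒_{≥k}, F}) ≥ ex(t,𝓗) + t(n−t)`. -/
theorem stmt16 {α : Type*} [Fintype α] (k : ℕ) (hk : 5 ≤ k)
    (F : SimpleGraph α) (hpF : PGE F ((k - 1) / 2 + 1)) :
    (∀ n : ℕ, (k - 1) / 2 + 2 ≤ n →
      ∀ T : SimpleGraph (Fin ((k - 1) / 2)), CoverFree F T →
        edgeCount T = exMax ((k - 1) / 2) (CoverFree F) →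
        TwoConnected (joinIndep ((k - 1) / 2) (n - (k - 1) / 2) T)
        ∧ ¬ HasCycleGE (joinIndep ((k - 1) / 2) (n - (k - 1) / 2) T) k
        ∧ ¬ ContainsCopy F (joinIndep ((k - 1) / 2) (n - (k - 1) / 2) T)
        ∧ edgeCount (joinIndep ((k - 1) / 2) (n - (k - 1) / 2) T)
            = exMax ((k - 1) / 2) (CoverFree F)
              + ((k - 1) / 2) * (n - (k - 1) / 2))
    ∧ ∀ n : ℕ, (k - 1) / 2 + 2 ≤ n →
        exMax ((k - 1) / 2) (CoverFree F) + ((k - 1) / 2) * (n - (k - 1) / 2)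
          ≤ exMax n (fun G => TwoConnected G ∧ ¬ HasCycleGE G k ∧ ¬ ContainsCopy F G) := by
  classical
  set t := (k - 1) / 2 with ht_def
  have ht2 : 2 ≤ t := by omega
  have h2tk : 2 * t < k := by omega
  have main : ∀ n : ℕ, t + 2 ≤ n →
      ∀ T : SimpleGraph (Fin t), CoverFree F T →
        edgeCount T = exMax t (CoverFree F) →
        TwoConnected (joinIndep t (n - t) T)
        ∧ ¬ HasCycleGE (joinIndep t (n - t) T) k
        ∧ ¬ ContainsCopy F (joinIndep t (n - t) T)
        ∧ edgeCount (joinIndep t (n - t) T) = exMax t (CoverFree F) + t * (n - t) := by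
    intro n hn T hfree hcnt
    set b := n - t with hb_def
    have hb2 : 2 ≤ b := by omega
    have hadjP : ∀ x y : Fin t ⊕ Fin b, ¬(Sum.isRight x = true) → (Sum.isRight y = true) →
        (joinIndep t b T).Adj x y := by
      intro x y hx hy
      obtain ⟨u, rfl⟩ := Sum.isLeft_iff.mp (by simpa using hx)
      obtain ⟨w', rfl⟩ := Sum.isRight_iff.mp hy
      exact ji_adj_lr u w'
    refine ⟨⟨?_, ?_, ?_⟩, ?_, ?_, ?_⟩
    · simp only [Fintype.card_sum, Fintype.card_fin]; omega
    · exact conn_full _ (fun x => Sum.isRight x = true) hadjP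
        ⟨Sum.inl ⟨0, by omega⟩, by simp⟩ ⟨Sum.inr ⟨0, by omega⟩, by simp⟩
    · intro v
      refine conn_induce _ (fun x => Sum.isRight x = true) hadjP _ ?_ ?_
      · by_cases h0 : (Sum.inl ⟨0, by omega⟩ : Fin t ⊕ Fin b) = v
        · refine ⟨Sum.inl ⟨1, by omega⟩, ?_, by simp⟩
          simp only [Set.mem_compl_iff, Set.mem_singleton_iff]
          rw [← h0]
          intro hcon
          simp [Fin.ext_iff] at hcon
        · exact ⟨Sum.inl ⟨0, by omega⟩, by simpa using h0, by simp⟩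
      · by_cases h0 : (Sum.inr ⟨0, by omega⟩ : Fin t ⊕ Fin b) = v
        · refine ⟨Sum.inr ⟨1, by omega⟩, ?_, by simp⟩
          simp only [Set.mem_compl_iff, Set.mem_singleton_iff]
          rw [← h0]
          intro hcon
          simp [Fin.ext_iff] at hcon
        · exact ⟨Sum.inr ⟨0, by omega⟩, by simpa using h0, by simp⟩
    · rintro ⟨v, w, hc, hkle⟩
      have := ji_cycle_length_le w hc
      omega
    · exact ji_no_copy F hfree
    · rw [ji_edgeCount, hcnt]
  refine ⟨main, ?_⟩
  intro n hn
  have hne : {m | ∃ G : SimpleGraph (Fin t), CoverFree F G ∧ edgeCount G = m}.Nonempty :=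
    ⟨edgeCount (⊥ : SimpleGraph (Fin t)), ⊥, coverFree_bot F t hpF, rfl⟩
  have hmem : exMax t (CoverFree F)
      ∈ {m | ∃ G : SimpleGraph (Fin t), CoverFree F G ∧ edgeCount G = m} := by
    rw [exMax]
    exact Nat.sSup_mem hne (exMax_bddAbove _)
  obtain ⟨T₀, hT₀free, hT₀cnt⟩ := hmem
  obtain ⟨tc, nocyc, nocopy, ecnt⟩ := main n hn T₀ hT₀free hT₀cnt
  set b := n - t with hb_def
  have hb2 : 2 ≤ b := by omega
  have htb : t + b = n := by omega
  set e : (Fin t ⊕ Fin b) ≃ Fin n := finSumFinEquiv.trans (finCongr htb) with he_def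
  set J := joinIndep t b T₀ with hJ_def
  set G' : SimpleGraph (Fin n) := J.comap e.symm.toEmbedding with hG'_def
  have φ : G' ≃g J := Iso.comap e.symm J
  let ψ : G' →g J := ⟨fun x => e.symm x, fun {u v} h => h⟩
  have hψinj : Function.Injective (ψ : Fin n → Fin t ⊕ Fin b) := by
    intro x y h
    exact e.symm.injective h
  have hadjP : ∀ x y : Fin n, ¬(Sum.isRight (e.symm x) = true) → (Sum.isRight (e.symm y) = true) →
      G'.Adj x y := by
    intro x y hx hy
    obtain ⟨u, hu⟩ := Sum.isLeft_iff.mp (by simpa using hx)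
    obtain ⟨w', hw'⟩ := Sum.isRight_iff.mp hy
    show J.Adj (e.symm x) (e.symm y)
    rw [hu, hw']
    exact ji_adj_lr u w'
  have hPG' : (TwoConnected G' ∧ ¬ HasCycleGE G' k ∧ ¬ ContainsCopy F G') := by
    refine ⟨⟨?_, ?_, ?_⟩, ?_, ?_⟩
    · simp only [Fintype.card_fin]; omega
    · exact conn_full _ (fun x => Sum.isRight (e.symm x) = true) hadjP
        ⟨e (Sum.inl ⟨0, by omega⟩), by simp⟩ ⟨e (Sum.inr ⟨0, by omega⟩), by simp⟩
    · intro v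
      refine conn_induce _ (fun x => Sum.isRight (e.symm x) = true) hadjP _ ?_ ?_
      · by_cases h0 : e (Sum.inl ⟨0, by omega⟩) = v
        · refine ⟨e (Sum.inl ⟨1, by omega⟩), ?_, by simp⟩
          simp only [Set.mem_compl_iff, Set.mem_singleton_iff]
          rw [← h0]
          intro hcon
          have := e.injective hcon
          simp [Fin.ext_iff] at this
        · exact ⟨e (Sum.inl ⟨0, by omega⟩), by simpa using h0, by simp⟩
      · by_cases h0 : e (Sum.inr ⟨0, by omega⟩) = v
        · refine ⟨e (Sum.inr ⟨1, by omega⟩), ?_, by simp⟩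
          simp only [Set.mem_compl_iff, Set.mem_singleton_iff]
          rw [← h0]
          intro hcon
          have := e.injective hcon
          simp [Fin.ext_iff] at this
        · exact ⟨e (Sum.inr ⟨0, by omega⟩), by simpa using h0, by simp⟩
    · intro hcy
      exact nocyc (hasCycleGE_mono ψ hψinj k hcy)
    · intro hcp
      exact nocopy (containsCopy_mono ψ hψinj hcp)
  have hcount : edgeCount G' = exMax t (CoverFree F) + t * b := by
    rw [edgeCount_congr φ, hJ_def, ji_edgeCount, hT₀cnt]
  rw [exMax]
  exact le_csSup (exMax_bddAbove _) ⟨G', hPG', hcount⟩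
end
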